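/- arXiv:1601.07975 — 9 statements merged into one kernel-verified Lean document; each statement's English description precedes it below -/
import Mathlib

section
/- Let σ : A^k → A^k be a cycle (i.e., for each w, the orbit {σ^j(w) : 0 ≤ j < |A|^k} is all of A^k), let v ∈ A^k, and let s be the word σ^0(v)σ^1(v)⋯σ^{|A|^k−1}(v) of length k|A|^k. Then the necklace [s] is (k,k)-perfect if and only if for every ℓ with 0 ≤ ℓ < k, every x ∈ A^ℓ and every y ∈ A^{k−ℓ}, there is a unique w ∈ A^k such that the last ℓ symbols of w equal x and the first k−ℓ symbols of σ(w) equal y. -/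
/-- `w` (a word of length `k`) occurs at position `i` in the cyclic word given by
the first `L` symbols of `s`. -/
def OccursAt {A : Type*} {k : ℕ} (s : ℕ → A) (L : ℕ) (w : Fin k → A) (i : ℕ) : Prop :=
  ∀ j : Fin k, s ((i + (j : ℕ)) % L) = w j

/-- The cyclic word given by the first `n * |A| ^ k` values of `s` is a
`(k,n)`-perfect necklace: every word of length `k` occurs exactly `n` times, and
the occurrence positions are pairwise distinct modulo `n`. -/
def IsPerfectNecklace {A : Type*} [Fintype A] (k n : ℕ) (s : ℕ → A) : Prop :=
  ∀ w : Fin k → A,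
    Nat.card {i : ℕ // i < n * Fintype.card A ^ k ∧
      OccursAt s (n * Fintype.card A ^ k) w i} = n ∧
    ∀ i i' : ℕ, i < n * Fintype.card A ^ k → i' < n * Fintype.card A ^ k →
      OccursAt s (n * Fintype.card A ^ k) w i →
      OccursAt s (n * Fintype.card A ^ k) w i' →
      i % n = i' % n → i = i'

namespace PerfectNecklaceAux

variable {A : Type*} [Fintype A] {k : ℕ}

/-- The infinite sequence obtained by concatenating the iterates of `σ` on `v`. -/
def pnb (hk : 0 < k) (σ : (Fin k → A) → (Fin k → A)) (v : Fin k → A) (i : ℕ) : A :=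
  σ^[i / k] v ⟨i % k, Nat.mod_lt _ hk⟩

/-- `w` matches the block word `u` at offset `r`. -/
def PCond (hk : 0 < k) (σ : (Fin k → A) → (Fin k → A)) (r : ℕ) (u w : Fin k → A) : Prop :=
  ∀ j : Fin k, if h : r + (j : ℕ) < k then u ⟨r + (j : ℕ), h⟩ = w j
    else σ u ⟨(r + (j : ℕ)) % k, Nat.mod_lt _ hk⟩ = w j

variable (σ : (Fin k → A) → (Fin k → A))

lemma iter_fixed (hσ : Function.Bijective σ)
    (hcyc : ∀ w u : Fin k → A, ∃ m : ℕ, σ^[m] w = u) (w : Fin k → A) :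
    σ^[Fintype.card A ^ k] w = w := by
  classical
  set C := Fintype.card A ^ k with hCdef
  have hC : Fintype.card (Fin k → A) = C := by simp [hCdef]
  obtain ⟨a, b, hab, he⟩ :=
    Fintype.exists_ne_map_eq_of_card_lt (fun m : Fin (C + 1) => σ^[(m : ℕ)] w)
      (by rw [hC, Fintype.card_fin]; omega)
  obtain ⟨c, d, hcd, hdC, hcde⟩ : ∃ c d : ℕ, c < d ∧ d ≤ C ∧ σ^[c] w = σ^[d] w := by
    rcases Nat.lt_or_ge (a : ℕ) (b : ℕ) with h | h
    · exact ⟨a, b, h, Nat.lt_succ_iff.mp b.isLt, he⟩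
    · have hba : (b : ℕ) < (a : ℕ) :=
        lt_of_le_of_ne h fun hh => hab (Fin.ext hh.symm)
      exact ⟨b, a, hba, Nat.lt_succ_iff.mp a.isLt, he.symm⟩
  set e := d - c with hedef
  have h1 : σ^[e] w = w := by
    have h2 : σ^[c] (σ^[e] w) = σ^[c] w := by
      rw [← Function.iterate_add_apply, show c + e = d by omega]
      exact hcde.symm
    exact hσ.injective.iterate c h2
  have he0 : 0 < e := by omega
  have heC : e ≤ C := by omega
  have hmul : ∀ t : ℕ, σ^[e * t] w = w := by
    intro t
    induction t with
    | zero => simp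
    | succ n ih => rw [Nat.mul_succ, Function.iterate_add_apply, h1, ih]
  have hmod : ∀ m : ℕ, σ^[m] w = σ^[m % e] w := by
    intro m
    conv_lhs => rw [← Nat.mod_add_div m e]
    rw [Function.iterate_add_apply, hmul]
  have hsurj : Function.Surjective (fun t : Fin e => σ^[(t : ℕ)] w) := by
    intro u
    obtain ⟨m, hm⟩ := hcyc w u
    exact ⟨⟨m % e, Nat.mod_lt _ he0⟩, (hmod m).symm.trans hm⟩
  have hle : C ≤ e := by
    have h3 := Fintype.card_le_of_surjective _ hsurj
    rwa [hC, Fintype.card_fin] at h3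
  have hE : e = C := le_antisymm heC hle
  rw [← hE]
  exact h1

lemma iter_mod (hσ : Function.Bijective σ)
    (hcyc : ∀ w u : Fin k → A, ∃ m : ℕ, σ^[m] w = u) (m : ℕ) (u : Fin k → A) :
    σ^[m] u = σ^[m % Fintype.card A ^ k] u := by
  set C := Fintype.card A ^ k with hCdef
  have h1 : σ^[C] u = u := iter_fixed σ hσ hcyc u
  have hmul : ∀ t : ℕ, σ^[C * t] u = u := by
    intro t
    induction t with
    | zero => simp
    | succ n ih => rw [Nat.mul_succ, Function.iterate_add_apply, h1, ih]
  conv_lhs => rw [← Nat.mod_add_div m C]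
  rw [Function.iterate_add_apply, hmul]

lemma orb (hσ : Function.Bijective σ)
    (hcyc : ∀ w u : Fin k → A, ∃ m : ℕ, σ^[m] w = u) (v u : Fin k → A) :
    ∃! q : ℕ, q < Fintype.card A ^ k ∧ σ^[q] v = u := by
  classical
  set C := Fintype.card A ^ k with hCdef
  have hC : Fintype.card (Fin k → A) = C := by simp [hCdef]
  haveI : Nonempty (Fin k → A) := ⟨u⟩
  have hC0 : 0 < C := by rw [← hC]; exact Fintype.card_pos
  have hsurj : Function.Surjective (fun t : Fin C => σ^[(t : ℕ)] v) := by
    intro z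
    obtain ⟨m, hm⟩ := hcyc v z
    exact ⟨⟨m % C, Nat.mod_lt _ hC0⟩, (iter_mod σ hσ hcyc m v).symm.trans hm⟩
  have hbij : Function.Bijective (fun t : Fin C => σ^[(t : ℕ)] v) :=
    (Fintype.bijective_iff_surjective_and_card _).mpr
      ⟨hsurj, by rw [Fintype.card_fin, hC]⟩
  obtain ⟨m, hm⟩ := hcyc v u
  refine ⟨m % C, ⟨Nat.mod_lt _ hC0, (iter_mod σ hσ hcyc m v).symm.trans hm⟩, ?_⟩
  rintro q ⟨hq, hqe⟩
  have h2 : (⟨q, hq⟩ : Fin C) = ⟨m % C, Nat.mod_lt _ hC0⟩ := by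
    apply hbij.injective
    show σ^[q] v = σ^[m % C] v
    rw [hqe, (iter_mod σ hσ hcyc m v).symm.trans hm]
  exact congrArg Fin.val h2

lemma div_helper (hk : 0 < k) (q x : ℕ) (hx : x < k) : (k * q + x) / k = q := by
  rw [Nat.mul_add_div hk, Nat.div_eq_of_lt hx, add_zero]

lemma mod_helper (q x : ℕ) (hx : x < k) : (k * q + x) % k = x := by
  rw [Nat.mul_add_mod, Nat.mod_eq_of_lt hx]

lemma pnb_eq (hk : 0 < k) (v : Fin k → A) (q x : ℕ) (hx : x < k) :
    pnb hk σ v (k * q + x) = σ^[q] v ⟨x, hx⟩ := by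
  unfold pnb
  rw [div_helper hk q x hx]
  exact congrArg _ (Fin.ext (mod_helper q x hx))

lemma pnb_per (hk : 0 < k) (hσ : Function.Bijective σ)
    (hcyc : ∀ w u : Fin k → A, ∃ m : ℕ, σ^[m] w = u) (v : Fin k → A) (m : ℕ) :
    pnb hk σ v (m % (k * Fintype.card A ^ k)) = pnb hk σ v m := by
  set C := Fintype.card A ^ k with hCdef
  have h2 : m % (k * C) % k = m % k := Nat.mod_mod_of_dvd m ⟨C, rfl⟩
  have h1 : m % (k * C) / k = m / k % C := Nat.mod_mul_right_div_self m k C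
  unfold pnb
  rw [h1, ← iter_mod σ hσ hcyc (m / k) v]
  exact congrArg _ (Fin.ext h2)

lemma pchar (hk : 0 < k) (hσ : Function.Bijective σ)
    (hcyc : ∀ w u : Fin k → A, ∃ m : ℕ, σ^[m] w = u) (v : Fin k → A)
    (w : Fin k → A) (i : ℕ) :
    OccursAt (pnb hk σ v) (k * Fintype.card A ^ k) w i ↔
      PCond hk σ (i % k) (σ^[i / k] v) w := by
  unfold OccursAt PCond
  refine forall_congr' fun j => ?_
  rw [pnb_per σ hk hσ hcyc v (i + (j : ℕ))]
  have hdm := Nat.div_add_mod i k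
  have hj := j.isLt
  have hr : i % k < k := Nat.mod_lt _ hk
  by_cases h : i % k + (j : ℕ) < k
  · rw [dif_pos h]
    have hsplit : i + (j : ℕ) = k * (i / k) + (i % k + (j : ℕ)) := by omega
    rw [hsplit, pnb_eq σ hk v (i / k) _ h]
  · rw [dif_neg h]
    have hkq : k * (i / k + 1) = k * (i / k) + k := by ring
    have hsplit : i + (j : ℕ) = k * (i / k + 1) + (i % k + (j : ℕ) - k) := by omega
    rw [hsplit, pnb_eq σ hk v (i / k + 1) (i % k + (j : ℕ) - k) (by omega)]
    rw [Function.iterate_succ_apply' σ (i / k) v]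
    have hmodeq : (i % k + (j : ℕ)) % k = i % k + (j : ℕ) - k := by
      have e : i % k + (j : ℕ) = k + (i % k + (j : ℕ) - k) := by omega
      conv_lhs => rw [e]
      rw [Nat.add_mod_left]
      exact Nat.mod_eq_of_lt (show i % k + (j : ℕ) - k < k by omega)
    have hlt2 : i % k + (j : ℕ) - k < k := by omega
    have e1 : (⟨i % k + (j : ℕ) - k, hlt2⟩ : Fin k)
        = ⟨(i % k + (j : ℕ)) % k, Nat.mod_lt _ hk⟩ := Fin.ext hmodeq.symm
    rw [e1]

lemma lt_helper (hk : 0 < k) {C q r : ℕ} (hq : q < C) (hr : r < k) :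
    k * q + r < k * C := by
  calc k * q + r < k * q + k := by omega
    _ = k * (q + 1) := by ring
    _ ≤ k * C := Nat.mul_le_mul_left k hq

lemma occ_of (hk : 0 < k) (hσ : Function.Bijective σ)
    (hcyc : ∀ w u : Fin k → A, ∃ m : ℕ, σ^[m] w = u) (v : Fin k → A)
    (w : Fin k → A) (q r : ℕ) (hr : r < k) (h : PCond hk σ r (σ^[q] v) w) :
    OccursAt (pnb hk σ v) (k * Fintype.card A ^ k) w (k * q + r) := by
  rw [pchar σ hk hσ hcyc v, div_helper hk q r hr, mod_helper q r hr]
  exact h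

lemma perfect_iff_key (hk : 0 < k) (hσ : Function.Bijective σ)
    (hcyc : ∀ w u : Fin k → A, ∃ m : ℕ, σ^[m] w = u) (v : Fin k → A) :
    IsPerfectNecklace k k (pnb hk σ v) ↔
      ∀ w : Fin k → A, ∀ r : ℕ, r < k →
        ∃! u : Fin k → A, PCond hk σ r u w := by
  classical
  constructor
  · intro hP w r hr
    obtain ⟨hcnt, hdist⟩ := hP w
    have hex : ∃ u, PCond hk σ r u w := by
      by_contra hno
      push_neg at hno
      haveI : Finite {i : ℕ // i < k * Fintype.card A ^ k ∧
          OccursAt (pnb hk σ v) (k * Fintype.card A ^ k) w i} := by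
        refine Finite.of_injective
          (fun p => (⟨p.1, p.2.1⟩ : Fin (k * Fintype.card A ^ k))) ?_
        intro p q h
        exact Subtype.ext (by simpa using congrArg Fin.val h)
      haveI := Fintype.ofFinite {i : ℕ // i < k * Fintype.card A ^ k ∧
          OccursAt (pnb hk σ v) (k * Fintype.card A ^ k) w i}
      have hne : ∀ p : {i : ℕ // i < k * Fintype.card A ^ k ∧
          OccursAt (pnb hk σ v) (k * Fintype.card A ^ k) w i}, p.1 % k ≠ r := by
        intro p h
        apply hno (σ^[p.1 / k] v)
        have h2 := (pchar σ hk hσ hcyc v w p.1).1 p.2.2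
        rwa [h] at h2
      have hinj : Function.Injective
          (fun p : {i : ℕ // i < k * Fintype.card A ^ k ∧
              OccursAt (pnb hk σ v) (k * Fintype.card A ^ k) w i} =>
            (⟨p.1 % k, Nat.mod_lt _ hk⟩ : Fin k)) := by
        intro p q h
        have h1 : p.1 % k = q.1 % k := congrArg Fin.val h
        exact Subtype.ext (hdist p.1 q.1 p.2.1 q.2.1 p.2.2 q.2.2 h1)
      have hnr : (⟨r, hr⟩ : Fin k) ∉ Set.range
          (fun p : {i : ℕ // i < k * Fintype.card A ^ k ∧
              OccursAt (pnb hk σ v) (k * Fintype.card A ^ k) w i} =>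
            (⟨p.1 % k, Nat.mod_lt _ hk⟩ : Fin k)) := by
        rintro ⟨p, hp⟩
        exact hne p (congrArg Fin.val hp)
      have hlt := Fintype.card_lt_of_injective_of_notMem _ hinj hnr
      rw [Fintype.card_fin] at hlt
      rw [Nat.card_eq_fintype_card] at hcnt
      omega
    obtain ⟨u₀, hu₀⟩ := hex
    refine ⟨u₀, hu₀, ?_⟩
    intro u₁ hu₁
    obtain ⟨q₀, ⟨hq₀C, hq₀v⟩, -⟩ := orb σ hσ hcyc v u₀
    obtain ⟨q₁, ⟨hq₁C, hq₁v⟩, -⟩ := orb σ hσ hcyc v u₁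
    have ho₀ : OccursAt (pnb hk σ v) (k * Fintype.card A ^ k) w (k * q₀ + r) :=
      occ_of σ hk hσ hcyc v w q₀ r hr (by rw [hq₀v]; exact hu₀)
    have ho₁ : OccursAt (pnb hk σ v) (k * Fintype.card A ^ k) w (k * q₁ + r) :=
      occ_of σ hk hσ hcyc v w q₁ r hr (by rw [hq₁v]; exact hu₁)
    have heq := hdist (k * q₁ + r) (k * q₀ + r) (lt_helper hk hq₁C hr)
      (lt_helper hk hq₀C hr) ho₁ ho₀
      (by rw [mod_helper q₁ r hr, mod_helper q₀ r hr])
    have hqq : q₁ = q₀ := Nat.eq_of_mul_eq_mul_left hk (by omega)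
    rw [← hq₁v, hqq, hq₀v]
  · intro hK w
    choose u hu₁ hu₂ using fun r : Fin k => hK w r r.isLt
    choose q hq₀ hq₃ using fun r : Fin k => orb σ hσ hcyc v (u r)
    have hq₁ : ∀ r : Fin k, q r < Fintype.card A ^ k := fun r => (hq₀ r).1
    have hq₂ : ∀ r : Fin k, σ^[q r] v = u r := fun r => (hq₀ r).2
    set S := {i : ℕ // i < k * Fintype.card A ^ k ∧
      OccursAt (pnb hk σ v) (k * Fintype.card A ^ k) w i} with hSdef
    have hφmem : ∀ r : Fin k, k * q r + (r : ℕ) < k * Fintype.card A ^ k ∧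
        OccursAt (pnb hk σ v) (k * Fintype.card A ^ k) w (k * q r + (r : ℕ)) := by
      intro r
      refine ⟨lt_helper hk (hq₁ r) r.isLt, ?_⟩
      exact occ_of σ hk hσ hcyc v w (q r) r r.isLt (by rw [hq₂ r]; exact hu₁ r)
    set φ : Fin k → S := fun r => ⟨k * q r + (r : ℕ), hφmem r⟩ with hφdef
    have hsurjaux : ∀ p : S, φ ⟨p.1 % k, Nat.mod_lt _ hk⟩ = p := by
      intro p
      set r : Fin k := ⟨p.1 % k, Nat.mod_lt _ hk⟩ with hrdef
      have hc := (pchar σ hk hσ hcyc v w p.1).1 p.2.2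
      have h1 : σ^[p.1 / k] v = u r := hu₂ r _ hc
      have hdiv : p.1 / k < Fintype.card A ^ k := by
        rw [Nat.div_lt_iff_lt_mul hk, Nat.mul_comm (Fintype.card A ^ k) k]
        exact p.2.1
      have h2 : p.1 / k = q r := hq₃ r _ ⟨hdiv, h1⟩
      apply Subtype.ext
      show k * q r + (r : ℕ) = p.1
      rw [← h2]
      exact Nat.div_add_mod p.1 k
    have hφbij : Function.Bijective φ := by
      constructor
      · intro r r' h
        have hv : k * q r + (r : ℕ) = k * q r' + (r' : ℕ) := congrArg Subtype.val h
        have hm : (k * q r + (r : ℕ)) % k = (k * q r' + (r' : ℕ)) % k := by rw [hv]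
        rw [mod_helper (q r) _ r.isLt, mod_helper (q r') _ r'.isLt] at hm
        exact Fin.ext hm
      · intro p
        exact ⟨⟨p.1 % k, Nat.mod_lt _ hk⟩, hsurjaux p⟩
    constructor
    · have hc := Nat.card_eq_of_bijective φ hφbij
      rw [Nat.card_eq_fintype_card, Fintype.card_fin] at hc
      exact hc.symm
    · intro i i' hi hi' ho ho' hm
      have c1 := (pchar σ hk hσ hcyc v w i).1 ho
      have c2 := (pchar σ hk hσ hcyc v w i').1 ho'
      rw [← hm] at c2
      set r : Fin k := ⟨i % k, Nat.mod_lt _ hk⟩ with hrdef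
      have e1 : σ^[i / k] v = u r := hu₂ r _ c1
      have e2 : σ^[i' / k] v = u r := hu₂ r _ c2
      have hd1 : i / k < Fintype.card A ^ k := by
        rw [Nat.div_lt_iff_lt_mul hk, Nat.mul_comm (Fintype.card A ^ k) k]; exact hi
      have hd2 : i' / k < Fintype.card A ^ k := by
        rw [Nat.div_lt_iff_lt_mul hk, Nat.mul_comm (Fintype.card A ^ k) k]; exact hi'
      have f1 : i / k = q r := hq₃ r _ ⟨hd1, e1⟩
      have f2 : i' / k = q r := hq₃ r _ ⟨hd2, e2⟩
      have hdd : i / k = i' / k := by rw [f1, f2]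
      calc i = k * (i / k) + i % k := (Nat.div_add_mod i k).symm
        _ = k * (i' / k) + i' % k := by rw [hdd, hm]
        _ = i' := Nat.div_add_mod i' k

lemma pcondIff (hk : 0 < k) (ℓ r : ℕ) (hrl : r + ℓ = k) (hr0 : 0 < r) (hl0 : 0 < ℓ)
    (u w : Fin k → A) (x : Fin ℓ → A) (y : Fin (k - ℓ) → A)
    (hx : ∀ j : Fin ℓ, x j = w ⟨(j : ℕ), by have := j.isLt; omega⟩)
    (hy : ∀ j : Fin (k - ℓ), y j = w ⟨ℓ + (j : ℕ), by have := j.isLt; omega⟩) :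
    ((∀ j : Fin ℓ, u ⟨k - ℓ + (j : ℕ), by have := j.isLt; omega⟩ = x j) ∧
      (∀ j : Fin (k - ℓ), σ u ⟨(j : ℕ), by have := j.isLt; omega⟩ = y j)) ↔
      PCond hk σ r u w := by
  constructor
  · rintro ⟨h1, h2⟩ j
    have hjk := j.isLt
    by_cases h : r + (j : ℕ) < k
    · rw [dif_pos h]
      have hj : (j : ℕ) < ℓ := by omega
      have e1 : (⟨r + (j : ℕ), h⟩ : Fin k)
          = ⟨k - ℓ + (j : ℕ), by omega⟩ :=
        Fin.ext (show r + (j : ℕ) = k - ℓ + (j : ℕ) by omega)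
      rw [e1, h1 ⟨(j : ℕ), hj⟩, hx ⟨(j : ℕ), hj⟩]
    · rw [dif_neg h]
      have hmodeq : (r + (j : ℕ)) % k = (j : ℕ) - ℓ := by
        have e : r + (j : ℕ) = k + ((j : ℕ) - ℓ) := by omega
        rw [e, Nat.add_mod_left]
        exact Nat.mod_eq_of_lt (show (j : ℕ) - ℓ < k by omega)
      have hjb : (j : ℕ) - ℓ < k - ℓ := by omega
      have e1 : (⟨(r + (j : ℕ)) % k, Nat.mod_lt _ hk⟩ : Fin k)
          = ⟨(j : ℕ) - ℓ, by omega⟩ := Fin.ext hmodeq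
      rw [e1, h2 ⟨(j : ℕ) - ℓ, hjb⟩, hy ⟨(j : ℕ) - ℓ, hjb⟩]
      exact congrArg w (Fin.ext (by simp; omega))
  · intro hc
    constructor
    · intro j
      have hjl := j.isLt
      have hc1 := hc ⟨(j : ℕ), by omega⟩
      rw [dif_pos (show r + ((⟨(j : ℕ), by omega⟩ : Fin k) : ℕ) < k by
        simp; omega)] at hc1
      rw [hx j]
      have e1 : (⟨k - ℓ + (j : ℕ), by omega⟩ : Fin k)
          = ⟨r + (j : ℕ), by omega⟩ :=
        Fin.ext (show k - ℓ + (j : ℕ) = r + (j : ℕ) by omega)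
      rw [e1]
      exact hc1
    · intro j
      have hjl := j.isLt
      have hc1 := hc ⟨ℓ + (j : ℕ), by omega⟩
      rw [dif_neg (show ¬ (r + ((⟨ℓ + (j : ℕ), by omega⟩ : Fin k) : ℕ) < k) by
        simp; omega)] at hc1
      have hmod2 : (r + (ℓ + (j : ℕ))) % k = (j : ℕ) := by
        have e : r + (ℓ + (j : ℕ)) = k + (j : ℕ) := by omega
        rw [e, Nat.add_mod_left]
        exact Nat.mod_eq_of_lt (show (j : ℕ) < k by omega)
      rw [hy j]
      have e1 : (⟨(j : ℕ), by omega⟩ : Fin k)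
          = ⟨(r + (ℓ + (j : ℕ))) % k, Nat.mod_lt _ hk⟩ := Fin.ext hmod2.symm
      rw [e1]
      exact hc1

end PerfectNecklaceAux

open PerfectNecklaceAux in
/-- Given a cycle `σ` on `A^k` and a starting word `v`, the necklace obtained by
concatenating `σ^0(v) σ^1(v) ⋯ σ^{|A|^k − 1}(v)` is `(k,k)`-perfect iff for every
`ℓ < k`, every `x ∈ A^ℓ` and every `y ∈ A^{k−ℓ}` there is a unique `w ∈ A^k` whose
last `ℓ` symbols equal `x` and such that the first `k−ℓ` symbols of `σ(w)` equal `y`. -/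
theorem perfect_iff_unique_rewriting {A : Type*} [Fintype A] (k : ℕ) (hk : 0 < k)
    (σ : (Fin k → A) → (Fin k → A)) (hσ : Function.Bijective σ)
    (hcyc : ∀ w u : Fin k → A, ∃ m : ℕ, σ^[m] w = u) (v : Fin k → A) :
    IsPerfectNecklace k k (fun i => σ^[i / k] v ⟨i % k, Nat.mod_lt _ hk⟩) ↔
      ∀ ℓ : ℕ, (hℓ : ℓ < k) → ∀ x : Fin ℓ → A, ∀ y : Fin (k - ℓ) → A,
        ∃! w : Fin k → A,
          (∀ j : Fin ℓ, w ⟨k - ℓ + (j : ℕ), by have := j.isLt; omega⟩ = x j) ∧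
          (∀ j : Fin (k - ℓ), σ w ⟨(j : ℕ), by have := j.isLt; omega⟩ = y j) := by
  classical
  have hmain := perfect_iff_key σ hk hσ hcyc v
  rw [show (fun i => σ^[i / k] v ⟨i % k, Nat.mod_lt _ hk⟩) = pnb hk σ v from rfl]
  rw [hmain]
  constructor
  · intro hK ℓ hℓ x y
    by_cases h0 : ℓ = 0
    · subst h0
      obtain ⟨u, hu⟩ := hσ.surjective (fun t : Fin k => y ⟨(t : ℕ), by
        have := t.isLt; omega⟩)
      refine ⟨u, ⟨fun j => j.elim0, fun j => ?_⟩, ?_⟩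
      · rw [hu]
      · rintro u' ⟨-, h2⟩
        apply hσ.injective
        rw [hu]
        funext t
        have h3 := h2 ⟨(t : ℕ), by have := t.isLt; omega⟩
        have e1 : (⟨((⟨(t : ℕ), by have := t.isLt; omega⟩ : Fin (k - 0)) : ℕ),
            by have := t.isLt; omega⟩ : Fin k) = t := Fin.ext rfl
        rw [e1] at h3
        exact h3
    · have hℓ0 : 0 < ℓ := Nat.pos_of_ne_zero h0
      set W : Fin k → A := fun j => if h : (j : ℕ) < ℓ then x ⟨j, h⟩
        else y ⟨(j : ℕ) - ℓ, by have := j.isLt; omega⟩ with hWdef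
      have hx : ∀ j : Fin ℓ, x j = W ⟨(j : ℕ), by have := j.isLt; omega⟩ := by
        intro j
        have : W ⟨(j : ℕ), by have := j.isLt; omega⟩ = x ⟨(j : ℕ), j.isLt⟩ := by
          simp only [hWdef]
          rw [dif_pos (show ((⟨(j : ℕ), by have := j.isLt; omega⟩ : Fin k) : ℕ) < ℓ
            from j.isLt)]
        rw [this]
      have hy : ∀ j : Fin (k - ℓ), y j = W ⟨ℓ + (j : ℕ), by have := j.isLt; omega⟩ := by
        intro j
        have hjl := j.isLt
        have : W ⟨ℓ + (j : ℕ), by omega⟩ = y ⟨ℓ + (j : ℕ) - ℓ, by omega⟩ := by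
          simp only [hWdef]
          rw [dif_neg (show ¬ ((⟨ℓ + (j : ℕ), by omega⟩ : Fin k) : ℕ) < ℓ by
            simp)]
        rw [this]
        exact congrArg y (Fin.ext (show (j : ℕ) = ℓ + (j : ℕ) - ℓ by omega))
      have hiff : ∀ u : Fin k → A,
          ((∀ j : Fin ℓ, u ⟨k - ℓ + (j : ℕ), by have := j.isLt; omega⟩ = x j) ∧
            (∀ j : Fin (k - ℓ), σ u ⟨(j : ℕ), by have := j.isLt; omega⟩ = y j)) ↔
          PCond hk σ (k - ℓ) u W := fun u =>
        pcondIff σ hk ℓ (k - ℓ) (by omega) (by omega) hℓ0 u W x y hx hy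
      exact (existsUnique_congr hiff).mpr (hK W (k - ℓ) (by omega))
  · intro hR w r hr
    by_cases h0 : r = 0
    · subst h0
      refine ⟨w, ?_, ?_⟩
      · intro j
        rw [dif_pos (show 0 + (j : ℕ) < k by simpa using j.isLt)]
        exact congrArg w (Fin.ext (Nat.zero_add _))
      · intro u' h'
        funext j
        have h1 := h' j
        rw [dif_pos (show 0 + (j : ℕ) < k by simpa using j.isLt)] at h1
        rw [← h1]
        exact congrArg u' (Fin.ext (Nat.zero_add _).symm)
    · have hr0 : 0 < r := Nat.pos_of_ne_zero h0
      have hiff : ∀ u : Fin k → A,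
          ((∀ j : Fin (k - r), u ⟨k - (k - r) + (j : ℕ), by have := j.isLt; omega⟩
              = w ⟨(j : ℕ), by have := j.isLt; omega⟩) ∧
            (∀ j : Fin (k - (k - r)), σ u ⟨(j : ℕ), by have := j.isLt; omega⟩
              = w ⟨(k - r) + (j : ℕ), by have := j.isLt; omega⟩)) ↔
          PCond hk σ r u w := fun u =>
        pcondIff σ hk (k - r) r (by omega) hr0 (by omega) u w
          (fun j => w ⟨(j : ℕ), by have := j.isLt; omega⟩)
          (fun j => w ⟨(k - r) + (j : ℕ), by have := j.isLt; omega⟩)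
          (fun j => rfl) (fun j => rfl)
      exact (existsUnique_congr hiff).mp
        (hR (k - r) (by omega)
          (fun j => w ⟨(j : ℕ), by have := j.isLt; omega⟩)
          (fun j => w ⟨(k - r) + (j : ℕ), by have := j.isLt; omega⟩))
end

section
/- Let b ≥ 2, k ≥ 1, and let r be a positive integer coprime with b. Identify A^k = {0,…,b−1}^k with ℤ/b^kℤ via base-b representation. Let s be the word of length k·b^k obtained by concatenating the base-b representations (of length k) of 0, r, 2r, …, (b^k−1)r (mod b^k). Then the necklace [s] is (k,k)-perfect. -/
private def Fmap {b : ℕ} (s : ℕ → Fin b) (k t : ℕ) (q : Fin (b ^ k)) : Fin k → Fin b :=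
  fun j => s ((k * (q : ℕ) + t + (j : ℕ)) % (k * b ^ k))


private lemma mod_pow_digits {b : ℕ} (hb : 2 ≤ b) {x x' : ℕ} :
    ∀ m, (∀ e < m, x / b ^ e % b = x' / b ^ e % b) → x % b ^ m = x' % b ^ m := by
  intro m
  induction m with
  | zero => intro _; simp [Nat.mod_one]
  | succ m ih =>
    intro h
    rw [Nat.mod_pow_succ, Nat.mod_pow_succ, ih (fun e he => h e (by omega)), h m (by omega)]

private lemma digits_inj {b : ℕ} (hb : 2 ≤ b) {m x x' : ℕ} (hx : x < b ^ m) (hx' : x' < b ^ m)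
    (h : ∀ e < m, x / b ^ e % b = x' / b ^ e % b) : x = x' := by
  have := mod_pow_digits hb m h
  rwa [Nat.mod_eq_of_lt hx, Nat.mod_eq_of_lt hx'] at this

private lemma key_inj {b k r : ℕ} (hb : 2 ≤ b) (hcop : Nat.Coprime r b)
    {t q q' : ℕ} (ht : t < k) (hq : q < b ^ k) (hq' : q' < b ^ k)
    (h : ∀ j < k,
      (if t + j < k then q * r % b ^ k / b ^ (k - 1 - (t + j)) % b
        else (q + 1) * r % b ^ k / b ^ (k - 1 - (t + j - k)) % b) =
      (if t + j < k then q' * r % b ^ k / b ^ (k - 1 - (t + j)) % b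
        else (q' + 1) * r % b ^ k / b ^ (k - 1 - (t + j - k)) % b)) :
    q = q' := by
  have hb0 : 0 < b := by omega
  have hN : 0 < b ^ k := pow_pos hb0 k
  set N := b ^ k with hNdef
  set x := q * r % N with hxd
  set x' := q' * r % N with hxd'
  set y := (q + 1) * r % N with hyd
  set y' := (q' + 1) * r % N with hyd'
  -- low digits of x and x' agree
  have h1 : x % b ^ (k - t) = x' % b ^ (k - t) := by
    apply mod_pow_digits hb
    intro e he
    have := h (k - 1 - t - e) (by omega)
    rw [if_pos (by omega), if_pos (by omega)] at this
    have he2 : t + (k - 1 - t - e) = k - 1 - e := by omega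
    rw [he2] at this
    have he3 : k - 1 - (k - 1 - e) = e := by omega
    rwa [he3] at this
  -- high digits of y and y' agree
  have hsplit : b ^ (k - t) * b ^ t = N := by rw [← pow_add]; congr 1; omega
  have h2 : y / b ^ (k - t) = y' / b ^ (k - t) := by
    have hyl : y / b ^ (k - t) < b ^ t :=
      Nat.div_lt_of_lt_mul (by rw [hsplit]; exact Nat.mod_lt _ hN)
    have hyl' : y' / b ^ (k - t) < b ^ t :=
      Nat.div_lt_of_lt_mul (by rw [hsplit]; exact Nat.mod_lt _ hN)
    apply digits_inj hb hyl hyl'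
    intro f hf
    rw [Nat.div_div_eq_div_mul, Nat.div_div_eq_div_mul, ← pow_add]
    have := h (k - 1 - f) (by omega)
    rw [if_neg (by omega), if_neg (by omega)] at this
    have he2 : t + (k - 1 - f) - k = t - 1 - f := by omega
    rw [he2] at this
    have he3 : k - 1 - (t - 1 - f) = k - t + f := by omega
    rwa [he3] at this
  have hdvd : b ^ (k - t) ∣ N := pow_dvd_pow b (by omega)
  have hyx : y = (x + r) % N := by
    rw [hyd, hxd, Nat.mod_add_mod, add_mul, one_mul]
  have hyx' : y' = (x' + r) % N := by
    rw [hyd', hxd', Nat.mod_add_mod, add_mul, one_mul]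
  have hylow : y % b ^ (k - t) = y' % b ^ (k - t) := by
    rw [hyx, hyx', Nat.mod_mod_of_dvd _ hdvd, Nat.mod_mod_of_dvd _ hdvd,
        ← Nat.mod_add_mod, h1, Nat.mod_add_mod]
  have hyy : y = y' := by
    have a1 := Nat.div_add_mod y (b ^ (k - t))
    have a2 := Nat.div_add_mod y' (b ^ (k - t))
    rw [h2, hylow] at a1
    exact a1.symm.trans a2
  have hxx : x = x' := by
    have hmod : x + r ≡ x' + r [MOD N] := by
      show (x + r) % N = (x' + r) % N
      rw [← hyx, ← hyx', hyy]
    have := Nat.ModEq.add_right_cancel' r hmod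
    have hx1 : x < N := Nat.mod_lt _ hN
    have hx2 : x' < N := Nat.mod_lt _ hN
    rwa [Nat.ModEq, Nat.mod_eq_of_lt hx1, Nat.mod_eq_of_lt hx2] at this
  have hcopN : Nat.Coprime r N := hcop.pow_right k
  have hqr : q * r ≡ q' * r [MOD N] := by
    show q * r % N = q' * r % N
    rw [← hxd, ← hxd', hxx]
  have := Nat.ModEq.cancel_right_of_coprime (by rw [Nat.gcd_comm]; exact hcopN) hqr
  rwa [Nat.ModEq, Nat.mod_eq_of_lt hq, Nat.mod_eq_of_lt hq'] at this


private lemma window_digit {b k : ℕ} (r : ℕ) (hb : 2 ≤ b) (hk : 0 < k) {q t j : ℕ}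
    (hq : q < b ^ k) (ht : t < k) (hj : j < k) :
    ((k * q + t + j) % (k * b ^ k)) / k * r % b ^ k
        / b ^ (k - 1 - ((k * q + t + j) % (k * b ^ k)) % k) % b =
    if t + j < k then q * r % b ^ k / b ^ (k - 1 - (t + j)) % b
    else (q + 1) * r % b ^ k / b ^ (k - 1 - (t + j - k)) % b := by
  have hb0 : 0 < b := by omega
  have hN : 0 < b ^ k := pow_pos hb0 k
  by_cases hc : t + j < k
  · have hmul : k * (q + 1) ≤ k * b ^ k := Nat.mul_le_mul_left k (by omega)
    have hmul' : k * (q + 1) = k * q + k := by ring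
    have hlt : k * q + t + j < k * b ^ k := by omega
    rw [Nat.mod_eq_of_lt hlt]
    have e1 : k * q + t + j = (t + j) + q * k := by ring
    rw [e1, Nat.add_mul_div_right _ _ hk, Nat.add_mul_mod_self_right,
        Nat.div_eq_of_lt hc, Nat.mod_eq_of_lt hc, zero_add, if_pos hc]
  · push_neg at hc
    have e0 : (q + 1) * k = k * q + k := by ring
    have e1 : k * q + t + j = (t + j - k) + (q + 1) * k := by omega
    rw [e1, if_neg (by omega)]
    rcases Nat.lt_or_ge (q + 1) (b ^ k) with hq1 | hq1
    · have hmul : (q + 2) * k ≤ b ^ k * k := Nat.mul_le_mul_right k (by omega)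
      have e2 : (q + 2) * k = (q + 1) * k + k := by ring
      have e3 : b ^ k * k = k * b ^ k := by ring
      have hlt : (t + j - k) + (q + 1) * k < k * b ^ k := by omega
      rw [Nat.mod_eq_of_lt hlt, Nat.add_mul_div_right _ _ hk, Nat.add_mul_mod_self_right,
          Nat.div_eq_of_lt (show t + j - k < k by omega),
          Nat.mod_eq_of_lt (show t + j - k < k by omega), zero_add]
    · have hqe : q + 1 = b ^ k := by omega
      rw [hqe]
      have e4 : (t + j - k) + b ^ k * k = (t + j - k) + 1 * (k * b ^ k) := by ring
      have hsmall : t + j - k < k * b ^ k := by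
        have : k * 1 ≤ k * b ^ k := Nat.mul_le_mul_left k hN
        omega
      rw [e4, Nat.add_mul_mod_self_right, Nat.mod_eq_of_lt hsmall,
          Nat.div_eq_of_lt (show t + j - k < k by omega),
          Nat.mod_eq_of_lt (show t + j - k < k by omega)]
      simp [Nat.mul_mod_right]


private lemma Fmap_bij {b k : ℕ} (r : ℕ) (hb : 2 ≤ b) (hk : 0 < k) (hcop : Nat.Coprime r b)
    (s : ℕ → Fin b) (hs : ∀ p, (s p : ℕ) = p / k * r % b ^ k / b ^ (k - 1 - p % k) % b)
    {t : ℕ} (ht : t < k) : Function.Bijective (Fmap s k t) := by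
  rw [Fintype.bijective_iff_injective_and_card]
  constructor
  · intro q q' hqq
    apply Fin.ext
    apply key_inj hb hcop ht q.isLt q'.isLt
    intro j hj
    have hv := congrArg Fin.val (congrFun hqq ⟨j, hj⟩)
    simp only [Fmap, Fin.val_mk] at hv
    rw [hs, hs] at hv
    rw [← window_digit r hb hk q.isLt ht hj, ← window_digit r hb hk q'.isLt ht hj]
    exact hv
  · simp [Fintype.card_fun]

/-- Arithmetic progressions with difference coprime to the base give perfect necklaces:
concatenating the base-`b` representations (of length `k`) of
`0, r, 2r, …, (b^k − 1)·r (mod b^k)` yields a `(k,k)`-perfect necklace. -/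
theorem arithmetic_perfect (b k r : ℕ) (hb : 2 ≤ b) (hk : 0 < k) (hr : 0 < r)
    (hcop : Nat.Coprime r b) :
    IsPerfectNecklace k k
      (fun i => (⟨(i / k * r % b ^ k) / b ^ (k - 1 - i % k) % b,
        Nat.mod_lt _ (by omega)⟩ : Fin b)) := by
  have hb0 : 0 < b := by omega
  have hN : 0 < b ^ k := pow_pos hb0 k
  set s : ℕ → Fin b := fun i => (⟨(i / k * r % b ^ k) / b ^ (k - 1 - i % k) % b,
        Nat.mod_lt _ (by omega)⟩ : Fin b) with hsdef
  have hs : ∀ p, (s p : ℕ) = p / k * r % b ^ k / b ^ (k - 1 - p % k) % b := fun p => rfl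
  intro w
  simp only [Fintype.card_fin]
  -- the key rephrasing: occurrences at i correspond to Fmap values
  have hocc : ∀ (i : ℕ) (hi : i < k * b ^ k), OccursAt s (k * b ^ k) w i →
      Fmap s k (i % k) ⟨i / k, Nat.div_lt_of_lt_mul hi⟩ = w := by
    intro i hi hocc
    funext j
    show s ((k * (i / k) + i % k + (j : ℕ)) % (k * b ^ k)) = w j
    rw [Nat.div_add_mod]
    exact hocc j
  have hpart2 : ∀ i i' : ℕ, i < k * b ^ k → i' < k * b ^ k →
      OccursAt s (k * b ^ k) w i → OccursAt s (k * b ^ k) w i' →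
      i % k = i' % k → i = i' := by
    intro i i' hi hi' ho ho' hmod
    have h1 := hocc i hi ho
    have h2 := hocc i' hi' ho'
    rw [hmod] at h1
    have hq := (Fmap_bij r hb hk hcop s hs (Nat.mod_lt _ hk)).1 (h1.trans h2.symm)
    have hqv : i / k = i' / k := congrArg Fin.val hq
    have d1 := Nat.div_add_mod i k
    have d2 := Nat.div_add_mod i' k
    rw [hqv, hmod] at d1
    exact d1.symm.trans d2
  refine ⟨?_, hpart2⟩
  have hbij : Function.Bijective
      (fun x : {i : ℕ // i < k * b ^ k ∧ OccursAt s (k * b ^ k) w i} =>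
        (⟨x.1 % k, Nat.mod_lt _ hk⟩ : Fin k)) := by
    constructor
    · rintro ⟨i, hi, ho⟩ ⟨i', hi', ho'⟩ h
      have : i % k = i' % k := congrArg Fin.val h
      exact Subtype.ext (hpart2 i i' hi hi' ho ho' this)
    · intro t
      obtain ⟨q, hq⟩ := (Fmap_bij r hb hk hcop s hs t.isLt).2 w
      have hiLt : k * (q : ℕ) + (t : ℕ) < k * b ^ k := by
        have h1 : k * ((q : ℕ) + 1) ≤ k * b ^ k := Nat.mul_le_mul_left k q.isLt
        have h2 : k * ((q : ℕ) + 1) = k * (q : ℕ) + k := by ring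
        omega
      have hoi : OccursAt s (k * b ^ k) w (k * (q : ℕ) + (t : ℕ)) := by
        intro j
        exact congrFun hq j
      refine ⟨⟨k * (q : ℕ) + (t : ℕ), hiLt, hoi⟩, ?_⟩
      apply Fin.ext
      show (k * (q : ℕ) + (t : ℕ)) % k = (t : ℕ)
      rw [Nat.mul_add_mod, Nat.mod_eq_of_lt t.isLt]
  have := Nat.card_eq_of_bijective _ hbij
  simp only [Nat.card_eq_fintype_card, Fintype.card_fin] at this
  exact this
end

section
/- Let b ≥ 2 and k ≥ 1. The word obtained by concatenating all words of A^k = {0,…,b−1}^k in lexicographic order (i.e., the base-b representations of 0, 1, 2, …, b^k−1) forms a (k,k)-perfect necklace. -/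
lemma aux_digit_uniq {b : ℕ} (hb : 0 < b) :
    ∀ n, ∀ x y : ℕ, x < b ^ n → y < b ^ n →
      (∀ p, p < n → x / b ^ p % b = y / b ^ p % b) → x = y := by
  intro n
  induction n with
  | zero => intro x y hx hy _; simp at hx hy; omega
  | succ n ih =>
    intro x y hx hy h
    have h0 := h 0 (Nat.succ_pos n)
    simp at h0
    have hx' : x / b < b ^ n := by
      rw [Nat.div_lt_iff_lt_mul hb]; rw [pow_succ] at hx; exact hx
    have hy' : y / b < b ^ n := by
      rw [Nat.div_lt_iff_lt_mul hb]; rw [pow_succ] at hy; exact hy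
    have key := ih (x / b) (y / b) hx' hy' (fun p hp => by
      have := h (p + 1) (by omega)
      rwa [pow_succ', ← Nat.div_div_eq_div_mul, ← Nat.div_div_eq_div_mul] at this)
    have dx := Nat.div_add_mod x b
    have dy := Nat.div_add_mod y b
    rw [key] at dx
    omega

lemma aux_digit_exists {b : ℕ} (hb : 0 < b) :
    ∀ n (g : ℕ → ℕ), (∀ p, p < n → g p < b) →
      ∃ x, x < b ^ n ∧ ∀ p, p < n → x / b ^ p % b = g p := by
  intro n
  induction n with
  | zero => exact fun g _ => ⟨0, by simp, by omega⟩
  | succ n ih =>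
    intro g hg
    obtain ⟨x, hx, hdig⟩ := ih (fun p => g (p + 1)) (fun p hp => hg (p + 1) (by omega))
    refine ⟨g 0 + b * x, ?_, ?_⟩
    · have h0 : g 0 < b := hg 0 (by omega)
      calc g 0 + b * x < b + b * x := by omega
        _ = b * (x + 1) := by ring
        _ ≤ b * b ^ n := Nat.mul_le_mul_left b hx
        _ = b ^ (n + 1) := (pow_succ' b n).symm
    · intro p hp
      match p with
      | 0 =>
        simp only [pow_zero, Nat.div_one]
        rw [Nat.add_mul_mod_self_left, Nat.mod_eq_of_lt (hg 0 (by omega))]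
      | p + 1 =>
        rw [pow_succ', ← Nat.div_div_eq_div_mul, Nat.add_mul_div_left _ _ hb,
          Nat.div_eq_of_lt (hg 0 (by omega)), Nat.zero_add]
        exact hdig p (by omega)

lemma aux_mod_digit {b : ℕ} (hb : 0 < b) (n p x : ℕ) (hp : p < n) :
    x % b ^ n / b ^ p % b = x / b ^ p % b := by
  conv_rhs => rw [← Nat.div_add_mod x (b ^ n)]
  have hsplit : b ^ n = b ^ p * b ^ (n - p) := by rw [← pow_add]; congr 1; omega
  rw [hsplit, Nat.add_comm, mul_assoc, Nat.add_mul_div_left _ _ (pow_pos hb p)]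
  have hb1 : b ^ (n - p) = b * b ^ (n - p - 1) := by
    rw [← pow_succ']; congr 1; omega
  rw [hb1, mul_assoc, Nat.add_mul_mod_self_left]

lemma aux_rec_key {c d : ℕ} (hc : 0 < c) (hd : 0 < d) (x : ℕ) (hx : x < c * d) :
    (x + 1) % (c * d) / c = if x % c + 1 = c then (x / c + 1) % d else x / c := by
  have hdm := Nat.div_add_mod x c
  have hmlt : x % c < c := Nat.mod_lt _ hc
  by_cases hs : x % c + 1 = c
  · have hmul : c * (x / c + 1) = c * (x / c) + c := Nat.mul_succ c _
    have hx1 : x + 1 = c * (x / c + 1) := by omega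
    rw [if_pos hs, hx1, Nat.mul_mod_mul_left, Nat.mul_div_cancel_left _ hc]
  · have hlt : x + 1 < c * d := by
      rcases Nat.lt_or_ge (x + 1) (c * d) with h | h
      · exact h
      have hxe : x + 1 = c * d := by omega
      have h1 : (x + 1) % c = x % c + 1 := by
        conv_lhs => rw [← hdm]
        rw [Nat.add_assoc, Nat.add_comm (c * (x / c)), Nat.add_mul_mod_self_left,
          Nat.mod_eq_of_lt (by omega)]
      have h2 : (x + 1) % c = 0 := by rw [hxe]; exact Nat.mul_mod_right c d
      omega
    rw [if_neg hs, Nat.mod_eq_of_lt hlt]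
    conv_lhs => rw [← hdm]
    rw [Nat.add_assoc, Nat.add_comm (c * (x / c)), Nat.add_mul_div_left _ _ hc,
      Nat.div_eq_of_lt (by omega), Nat.zero_add]

lemma aux_rec {c d : ℕ} (hc : 0 < c) (hd : 0 < d) (m m' : ℕ)
    (hm : m < c * d) (hm' : m' < c * d) (h1 : m % c = m' % c)
    (h2 : (m + 1) % (c * d) / c = (m' + 1) % (c * d) / c) : m = m' := by
  have hcd : d * c = c * d := Nat.mul_comm d c
  rw [aux_rec_key hc hd m hm, aux_rec_key hc hd m' hm', h1] at h2
  have hq : m / c < d := Nat.div_lt_of_lt_mul hm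
  have hq' : m' / c < d := Nat.div_lt_of_lt_mul hm'
  have hdm := Nat.div_add_mod m c
  have hdm' := Nat.div_add_mod m' c
  have hqe : m / c = m' / c := by
    by_cases hs : m' % c + 1 = c
    · rw [if_pos hs, if_pos hs] at h2
      rcases Nat.lt_or_ge (m / c + 1) d with h | h
      · rcases Nat.lt_or_ge (m' / c + 1) d with h' | h'
        · rw [Nat.mod_eq_of_lt h, Nat.mod_eq_of_lt h'] at h2; omega
        · have he : m' / c + 1 = d := by omega
          rw [Nat.mod_eq_of_lt h, he, Nat.mod_self] at h2; exact absurd h2 (Nat.succ_ne_zero _)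
      · have he : m / c + 1 = d := by omega
        rw [he, Nat.mod_self] at h2
        rcases Nat.lt_or_ge (m' / c + 1) d with h' | h'
        · rw [Nat.mod_eq_of_lt h'] at h2; exact absurd h2.symm (Nat.succ_ne_zero _)
        · omega
    · rw [if_neg hs, if_neg hs] at h2; exact h2
  rw [hqe] at hdm
  omega

def neckS (b k : ℕ) (hb : 0 < b) : ℕ → Fin b :=
  fun i => ⟨i / k / b ^ (k - 1 - i % k) % b, Nat.mod_lt _ hb⟩

lemma neckS_step (b k : ℕ) (hb : 0 < b) (hk : 0 < k) (m r j : ℕ) (hm : m < b ^ k)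
    (hr : r < k) (hj : j < k) :
    ((neckS b k hb ((k * m + r + j) % (k * b ^ k))) : ℕ) =
      if r + j < k then m / b ^ (k - 1 - (r + j)) % b
      else (m + 1) % b ^ k / b ^ (k - 1 - (r + j - k)) % b := by
  show (k * m + r + j) % (k * b ^ k) / k / b ^ (k - 1 - (k * m + r + j) % (k * b ^ k) % k) % b = _
  by_cases h : r + j < k
  · have hkm : k * (m + 1) = k * m + k := by ring
    have hle : k * (m + 1) ≤ k * b ^ k := Nat.mul_le_mul_left k (show m + 1 ≤ b ^ k by omega)
    have h1 : k * m + r + j < k * b ^ k := by omega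
    rw [Nat.mod_eq_of_lt h1, Nat.add_assoc, Nat.mul_add_mod,
      Nat.mod_eq_of_lt (show r + j < k by omega), Nat.mul_add_div hk,
      Nat.div_eq_of_lt (show r + j < k by omega), Nat.add_zero, if_pos h]
  · rw [if_neg h]
    have hkm : k * (m + 1) = k * m + k := by ring
    have heq : k * m + r + j = k * (m + 1) + (r + j - k) := by omega
    rw [heq]
    by_cases h2 : m + 1 < b ^ k
    · have hkm2 : k * (m + 1 + 1) = k * (m + 1) + k := by ring
      have hle : k * (m + 1 + 1) ≤ k * b ^ k :=
        Nat.mul_le_mul_left k (show m + 1 + 1 ≤ b ^ k by omega)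
      have h1 : k * (m + 1) + (r + j - k) < k * b ^ k := by omega
      rw [Nat.mod_eq_of_lt h1, Nat.mul_add_mod,
        Nat.mod_eq_of_lt (show r + j - k < k by omega), Nat.mul_add_div hk,
        Nat.div_eq_of_lt (show r + j - k < k by omega), Nat.add_zero, Nat.mod_eq_of_lt h2]
    · have h2' : m + 1 = b ^ k := by omega
      have hlt2 : r + j - k < k * b ^ k := by
        have h3 : k ≤ k * b ^ k := Nat.le_mul_of_pos_right k (pow_pos hb k)
        omega
      rw [h2', Nat.add_mod_left, Nat.mod_eq_of_lt hlt2,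
        Nat.div_eq_of_lt (show r + j - k < k by omega), Nat.mod_self]
      simp

lemma neckS_occ (b k : ℕ) (hb : 0 < b) (hk : 0 < k) (w : Fin k → Fin b) (m r : ℕ)
    (hm : m < b ^ k) (hr : r < k) :
    OccursAt (neckS b k hb) (k * b ^ k) w (k * m + r) ↔
      ∀ j, ∀ hj : j < k, (if r + j < k then m / b ^ (k - 1 - (r + j)) % b
        else (m + 1) % b ^ k / b ^ (k - 1 - (r + j - k)) % b) = ((w ⟨j, hj⟩ : Fin b) : ℕ) := by
  constructor
  · intro h j hj
    have h1 : neckS b k hb ((k * m + r + j) % (k * b ^ k)) = w ⟨j, hj⟩ := h ⟨j, hj⟩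
    rw [← neckS_step b k hb hk m r j hm hr hj, h1]
  · intro h jf
    apply Fin.ext
    rw [neckS_step b k hb hk m r jf.1 hm hr jf.2]
    exact h jf.1 jf.2

lemma neckS_exists (b k : ℕ) (hb : 0 < b) (hk : 0 < k) (w : Fin k → Fin b) (r : ℕ)
    (hr : r < k) :
    ∃ i, i < k * b ^ k ∧ i % k = r ∧ OccursAt (neckS b k hb) (k * b ^ k) w i := by
  obtain ⟨low, hlowlt, hlowdig⟩ := aux_digit_exists hb (k - r)
      (fun p => ((w ⟨k - r - 1 - p, by omega⟩ : Fin b) : ℕ)) (fun p _ => (w _).isLt)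
  obtain ⟨high, hhighlt, hhighdig⟩ := aux_digit_exists hb r
      (fun p => ((w ⟨k - 1 - p, by omega⟩ : Fin b) : ℕ)) (fun p _ => (w _).isLt)
  have hc0 : 0 < b ^ (k - r) := pow_pos hb _
  have hd0 : 0 < b ^ r := pow_pos hb _
  have hsplit : b ^ r * b ^ (k - r) = b ^ k := by rw [← pow_add]; congr 1; omega
  set q := if low + 1 = b ^ (k - r) then (high + b ^ r - 1) % b ^ r else high with hqdef
  have hqlt : q < b ^ r := by
    rw [hqdef]; split
    · exact Nat.mod_lt _ hd0
    · exact hhighlt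
  have hq1 : (q + 1) * b ^ (k - r) = q * b ^ (k - r) + b ^ (k - r) := by ring
  have hq2 : (q + 1) * b ^ (k - r) ≤ b ^ r * b ^ (k - r) := Nat.mul_le_mul_right _ hqlt
  have hmlt : q * b ^ (k - r) + low < b ^ k := by omega
  have hA : (q * b ^ (k - r) + low) % b ^ (k - r) = low := by
    rw [Nat.mul_comm q (b ^ (k - r)), Nat.mul_add_mod, Nat.mod_eq_of_lt hlowlt]
  have hC : (q * b ^ (k - r) + low + 1) % b ^ k / b ^ (k - r) = high := by
    by_cases hcase : low + 1 = b ^ (k - r)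
    · have e1 : q * b ^ (k - r) + low + 1 = (q + 1) * b ^ (k - r) := by omega
      rw [e1, ← hsplit, Nat.mul_mod_mul_right, Nat.mul_div_cancel _ hc0, hqdef, if_pos hcase,
        Nat.mod_add_mod]
      have e2 : high + b ^ r - 1 + 1 = high + b ^ r := by omega
      rw [e2, Nat.add_mod_right, Nat.mod_eq_of_lt hhighlt]
    · have hlow1 : low + 1 < b ^ (k - r) := by omega
      have hqh : q = high := by rw [hqdef, if_neg hcase]
      have hlt : q * b ^ (k - r) + low + 1 < b ^ k := by omega
      rw [Nat.mod_eq_of_lt hlt, Nat.add_assoc, Nat.mul_comm q (b ^ (k - r)),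
        Nat.mul_add_div hc0, Nat.div_eq_of_lt hlow1, Nat.add_zero, hqh]
  refine ⟨k * (q * b ^ (k - r) + low) + r, ?_, ?_, ?_⟩
  · have h1 := Nat.mul_le_mul_left k (show q * b ^ (k - r) + low + 1 ≤ b ^ k by omega)
    have e : k * (q * b ^ (k - r) + low + 1) = k * (q * b ^ (k - r) + low) + k := by ring
    omega
  · rw [Nat.mul_add_mod, Nat.mod_eq_of_lt hr]
  · rw [neckS_occ b k hb hk w _ r hmlt hr]
    intro j hj
    by_cases hcase : r + j < k
    · rw [if_pos hcase]
      have hp : k - 1 - (r + j) < k - r := by omega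
      rw [← aux_mod_digit hb (k - r) (k - 1 - (r + j)) (q * b ^ (k - r) + low) hp, hA,
        hlowdig _ hp]
      have hidx : (⟨k - r - 1 - (k - 1 - (r + j)), by omega⟩ : Fin k) = (⟨j, hj⟩ : Fin k) := by
        simp only [Fin.mk.injEq]; omega
      rw [hidx]
    · rw [if_neg hcase]
      have ht : r - 1 - (r + j - k) < r := by omega
      have hsum : k - 1 - (r + j - k) = (k - r) + (r - 1 - (r + j - k)) := by omega
      rw [hsum, pow_add, ← Nat.div_div_eq_div_mul, hC, hhighdig _ ht]
      have hidx : (⟨k - 1 - (r - 1 - (r + j - k)), by omega⟩ : Fin k) = (⟨j, hj⟩ : Fin k) := by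
        simp only [Fin.mk.injEq]; omega
      rw [hidx]

lemma neckS_uniq (b k : ℕ) (hb : 0 < b) (hk : 0 < k) (w : Fin k → Fin b) (i i' : ℕ)
    (hi : i < k * b ^ k) (hi' : i' < k * b ^ k)
    (ho : OccursAt (neckS b k hb) (k * b ^ k) w i)
    (ho' : OccursAt (neckS b k hb) (k * b ^ k) w i')
    (hmod : i % k = i' % k) : i = i' := by
  have hr : i % k < k := Nat.mod_lt _ hk
  have hm : i / k < b ^ k := Nat.div_lt_of_lt_mul hi
  have hm' : i' / k < b ^ k := Nat.div_lt_of_lt_mul hi'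
  have hd : k * (i / k) + i % k = i := Nat.div_add_mod i k
  have hd' : k * (i' / k) + i' % k = i' := Nat.div_add_mod i' k
  rw [← hmod] at hd'
  have o1 := (neckS_occ b k hb hk w (i / k) (i % k) hm hr).mp (by rw [hd]; exact ho)
  have o2 := (neckS_occ b k hb hk w (i' / k) (i % k) hm' hr).mp (by rw [hd']; exact ho')
  have hc0 : 0 < b ^ (k - i % k) := pow_pos hb _
  have hd0 : 0 < b ^ (i % k) := pow_pos hb _
  have hsplit : b ^ (k - i % k) * b ^ (i % k) = b ^ k := by rw [← pow_add]; congr 1; omega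
  have hlow : i / k % b ^ (k - i % k) = i' / k % b ^ (k - i % k) := by
    apply aux_digit_uniq hb (k - i % k) _ _ (Nat.mod_lt _ hc0) (Nat.mod_lt _ hc0)
    intro p hp
    rw [aux_mod_digit hb _ p (i / k) hp, aux_mod_digit hb _ p (i' / k) hp]
    have hjk : k - i % k - 1 - p < k := by omega
    have e1 := o1 (k - i % k - 1 - p) hjk
    have e2 := o2 (k - i % k - 1 - p) hjk
    rw [if_pos (show i % k + (k - i % k - 1 - p) < k by omega)] at e1 e2
    have epe : k - 1 - (i % k + (k - i % k - 1 - p)) = p := by omega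
    rw [epe] at e1 e2
    rw [e1, e2]
  have hhigh : (i / k + 1) % b ^ k / b ^ (k - i % k)
      = (i' / k + 1) % b ^ k / b ^ (k - i % k) := by
    have hXlt : ∀ x : ℕ, x % b ^ k / b ^ (k - i % k) < b ^ (i % k) := by
      intro x
      apply Nat.div_lt_of_lt_mul
      calc x % b ^ k < b ^ k := Nat.mod_lt _ (pow_pos hb k)
        _ = b ^ (k - i % k) * b ^ (i % k) := hsplit.symm
    apply aux_digit_uniq hb (i % k) _ _ (hXlt _) (hXlt _)
    intro p hp
    have hjk : k - 1 - p < k := by omega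
    have e1 := o1 (k - 1 - p) hjk
    have e2 := o2 (k - 1 - p) hjk
    rw [if_neg (show ¬ (i % k + (k - 1 - p) < k) by omega)] at e1 e2
    have epe : k - 1 - (i % k + (k - 1 - p) - k) = (k - i % k) + p := by omega
    rw [epe, pow_add, ← Nat.div_div_eq_div_mul] at e1 e2
    rw [e1, e2]
  have hrec := aux_rec hc0 hd0 (i / k) (i' / k)
    (by rw [hsplit]; exact hm) (by rw [hsplit]; exact hm')
    hlow (by rw [hsplit]; exact hhigh)
  rw [hrec] at hd
  omega


/-- The `k`-ordered necklace — the concatenation of all words of `{0,…,b−1}^k` in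
lexicographic order, i.e. the base-`b` representations of `0, 1, …, b^k − 1` —
is a `(k,k)`-perfect necklace. -/
theorem ordered_necklace_perfect (b k : ℕ) (hb : 2 ≤ b) (hk : 0 < k) :
    IsPerfectNecklace k k
      (fun i => (⟨(i / k) / b ^ (k - 1 - i % k) % b,
        Nat.mod_lt _ (by omega)⟩ : Fin b)) := by
  have hb0 : 0 < b := by omega
  show IsPerfectNecklace k k (neckS b k hb0)
  intro w
  simp only [Fintype.card_fin]
  constructor
  · have hbij : Function.Bijective
        (fun x : {i : ℕ // i < k * b ^ k ∧ OccursAt (neckS b k hb0) (k * b ^ k) w i} =>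
          (⟨x.1 % k, Nat.mod_lt _ hk⟩ : Fin k)) := by
      constructor
      · rintro ⟨i, hi, ho⟩ ⟨i', hi', ho'⟩ h
        simp only [Fin.mk.injEq] at h
        exact Subtype.ext (neckS_uniq b k hb0 hk w i i' hi hi' ho ho' h)
      · intro r
        obtain ⟨i, h1, h2, h3⟩ := neckS_exists b k hb0 hk w r.1 r.2
        exact ⟨⟨i, h1, h3⟩, Fin.ext h2⟩
    rw [Nat.card_congr (Equiv.ofBijective _ hbij), Nat.card_eq_fintype_card, Fintype.card_fin]
  · intro i i' h1 h2 h3 h4 h5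
    exact neckS_uniq b k hb0 hk w i i' h1 h2 h3 h4 h5
end

section
/- If s is a cyclic word such that [s] is (k,n)-perfect, then the reversed cyclic word (reading s backwards) is also (k,n)-perfect. -/
/-!
Write `L = n * |A| ^ k`. Reading the reversed necklace at `i, …, i + k - 1` reads `s` backwards at
`-1 - i, …, -i - k` (mod `L`), so `w` occurs at `i` in the reversal exactly when the reversal of `w`
occurs in `s` at `-(i + k) mod L`. The map `i ↦ -(i + k) mod L` is an involution of `[0, L)` and,
as `n ∣ L`, it preserves congruence mod `n`; so it matches the occurrences of `w` in the reversal
bijectively with those of the reversal of `w` in `s`, distinctness mod `n` included.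
-/

section Reversal

variable {A : Type*} {k L : ℕ}

def cyclicReverse (L : ℕ) (s : ℕ → A) : ℕ → A := fun x => s (L - 1 - x % L)

def Occurrences (s : ℕ → A) (L : ℕ) (w : Fin k → A) : Type :=
  {i : ℕ // i < L ∧ OccursAt s L w i}

def OccurrencesDistinctMod (s : ℕ → A) (L n : ℕ) (w : Fin k → A) : Prop :=
  ∀ i i' : ℕ, i < L → i' < L → OccursAt s L w i → OccursAt s L w i' → i % n = i' % n → i = i'

def reverseStart (L k i : ℕ) : ℕ := (-(i + k : ℤ) % L).toNat

theorem cast_sub_one_sub_mod (hL : 0 < L) (x : ℕ) :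
    ((L - 1 - x % L : ℕ) : ℤ) = (-1 - x : ℤ) % L := by
  have hlt : x % L < L := Nat.mod_lt x hL
  have hdiv := Int.emod_add_mul_ediv (x : ℤ) L
  rw [← Int.natCast_mod] at hdiv
  rw [Nat.cast_sub (by omega), Nat.cast_sub (by omega)]
  calc (L - 1 - (x % L : ℕ) : ℤ) = (L - 1 - (x % L : ℕ) + L * (-(x / L : ℤ) - 1)) % L := by
        rw [Int.add_mul_emod_self_left, Int.emod_eq_of_lt (by omega) (by omega)]
    _ = (-1 - x : ℤ) % L := by congr 1; linear_combination -hdiv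

theorem cast_reverseStart (hL : 0 < L) (i : ℕ) :
    (reverseStart L k i : ℤ) = -(i + k : ℤ) % L :=
  Int.toNat_of_nonneg (Int.emod_nonneg _ (by omega))

theorem reverseStart_lt (hL : 0 < L) (i : ℕ) : reverseStart L k i < L := by
  have := Int.emod_lt_of_pos (-(i + k : ℤ)) (by omega : (0 : ℤ) < L)
  rw [← cast_reverseStart hL] at this
  omega

theorem reverseStart_reverseStart {i : ℕ} (hi : i < L) :
    reverseStart L k (reverseStart L k i) = i := by
  have hL : 0 < L := by omega
  zify
  rw [cast_reverseStart hL, cast_reverseStart hL]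
  calc -(-(i + k : ℤ) % L + k) % L = -(-(i + k : ℤ) + k) % L :=
        ((Int.mod_modEq _ _).add_right _).neg
    _ = i := by
      rw [show -(-(i + k : ℤ) + k) = i by ring]
      exact Int.emod_eq_of_lt (by omega) (by omega)

theorem reverseStart_modEq {n i i' : ℕ} (hL : 0 < L) (hn : n ∣ L) (h : i ≡ i' [MOD n]) :
    reverseStart L k i ≡ reverseStart L k i' [MOD n] := by
  rw [← Int.natCast_modEq_iff, cast_reverseStart hL, cast_reverseStart hL]
  have hmod (a : ℤ) : a % L ≡ a [ZMOD n] :=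
    (Int.mod_modEq _ _).of_dvd (Int.natCast_dvd_natCast.2 hn)
  exact (hmod _).trans ((((Int.natCast_modEq_iff.2 h).add_right _).neg).trans (hmod _).symm)

theorem sub_one_sub_add_rev_mod_mod (hL : 0 < L) (i : ℕ) (j : Fin k) :
    L - 1 - (i + j.rev) % L % L = (reverseStart L k i + j) % L := by
  zify
  rw [cast_sub_one_sub_mod hL, cast_reverseStart hL]
  have hrev : ((j.rev : ℕ) : ℤ) = k - 1 - j := by rw [Fin.val_rev]; omega
  calc (-1 - ((i + j.rev) % L : ℕ) : ℤ) ≡ -1 - (i + j.rev : ℕ) [ZMOD L] := by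
        rw [Int.natCast_mod]; exact (Int.mod_modEq _ _).sub_left _
    _ = -(i + k) + j := by push_cast; omega
    _ ≡ -(i + k : ℤ) % L + j [ZMOD L] := ((Int.mod_modEq _ _).symm.add_right _)

theorem occursAt_cyclicReverse_iff (hL : 0 < L) (s : ℕ → A) (w : Fin k → A) (i : ℕ) :
    OccursAt (cyclicReverse L s) L w i ↔ OccursAt s L (w ∘ Fin.rev) (reverseStart L k i) := by
  simp only [OccursAt, cyclicReverse, ← sub_one_sub_add_rev_mod_mod hL, Function.comp_apply]
  exact Fin.rev_surjective.forall

def occurrencesCyclicReverseEquiv (s : ℕ → A) (L : ℕ) (w : Fin k → A) :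
    Occurrences (cyclicReverse L s) L w ≃ Occurrences s L (w ∘ Fin.rev) where
  toFun x := ⟨reverseStart L k x.1, reverseStart_lt (Nat.zero_lt_of_lt x.2.1) _,
    (occursAt_cyclicReverse_iff (Nat.zero_lt_of_lt x.2.1) s w _).1 x.2.2⟩
  invFun y := ⟨reverseStart L k y.1, reverseStart_lt (Nat.zero_lt_of_lt y.2.1) _,
    (occursAt_cyclicReverse_iff (Nat.zero_lt_of_lt y.2.1) s w _).2
      (by rw [reverseStart_reverseStart y.2.1]; exact y.2.2)⟩
  left_inv x := Subtype.ext (reverseStart_reverseStart x.2.1)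
  right_inv y := Subtype.ext (reverseStart_reverseStart y.2.1)

theorem OccurrencesDistinctMod.cyclicReverse {s : ℕ → A} {n : ℕ} {w : Fin k → A} (hn : n ∣ L)
    (h : OccurrencesDistinctMod s L n (w ∘ Fin.rev)) :
    OccurrencesDistinctMod (cyclicReverse L s) L n w := by
  intro i i' hi hi' hoi hoi' hmod
  have hL : 0 < L := by omega
  have hstart : reverseStart L k i = reverseStart L k i' :=
    h _ _ (reverseStart_lt hL _) (reverseStart_lt hL _)
      ((occursAt_cyclicReverse_iff hL s w i).1 hoi) ((occursAt_cyclicReverse_iff hL s w i').1 hoi')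
      (reverseStart_modEq hL hn hmod)
  rw [← reverseStart_reverseStart (k := k) hi, hstart, reverseStart_reverseStart hi']

end Reversal

/-- Reversing a `(k,n)`-perfect necklace yields a `(k,n)`-perfect necklace. -/
theorem perfect_of_reverse {A : Type*} [Fintype A] (k n : ℕ)
    (s : ℕ → A) (hs : IsPerfectNecklace k n s) :
    IsPerfectNecklace k n
      (fun i => s (n * Fintype.card A ^ k - 1 - i % (n * Fintype.card A ^ k))) := by
  intro w
  obtain ⟨hcard, hdistinct⟩ := hs (w ∘ Fin.rev)
  exact ⟨(Nat.card_congr (occurrencesCyclicReverseEquiv s _ w)).trans hcard,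
    OccurrencesDistinctMod.cyclicReverse (Dvd.intro _ rfl) hdistinct⟩
end

section
/- Let [s] be a (k,n)-perfect necklace over an alphabet of size b, and let L be its period (the minimal L > 0 with s(i) = s((i+L) mod n·b^k) for all i). Then L = j·b^k for some positive integer j dividing n. -/
/-- The period of a `(k,n)`-perfect necklace (the least positive `L` such that
shifting the cyclic word by `L` leaves it invariant) is of the form `j·b^k`
for some positive divisor `j` of `n`. -/
theorem period_of_perfect {A : Type*} [Fintype A] (b k n L : ℕ)
    (hb : Fintype.card A = b) (hb2 : 2 ≤ b) (hk : 0 < k) (hn : 0 < n)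
    (s : ℕ → A) (hs : IsPerfectNecklace k n s)
    (hL : IsLeast {L' : ℕ | 0 < L' ∧
      ∀ i : ℕ, s (i % (n * b ^ k)) = s ((i + L') % (n * b ^ k))} L) :
    ∃ j : ℕ, 0 < j ∧ j ∣ n ∧ L = j * b ^ k := by
  simp only [IsPerfectNecklace, hb] at hs
  set N := n * b ^ k with hN
  have hNpos : 0 < N := Nat.mul_pos hn (pow_pos (by omega) k)
  obtain ⟨⟨hLpos, hLshift⟩, hLmin⟩ := hL
  -- shifting by multiples of L
  have hmul : ∀ m i : ℕ, s (i % N) = s ((i + m * L) % N) := by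
    intro m
    induction m with
    | zero => simp
    | succ m ih =>
      intro i
      have h1 := hLshift (i + m * L)
      have h2 := ih i
      rw [h2, h1]
      congr 2
      ring
  -- L divides N
  have hdvd : L ∣ N := by
    rcases Nat.eq_zero_or_pos (N % L) with h0 | hpos
    · exact Nat.dvd_of_mod_eq_zero h0
    · exfalso
      have hmem : (N % L) ∈ {L' : ℕ | 0 < L' ∧
          ∀ i : ℕ, s (i % N) = s ((i + L') % N)} := by
        refine ⟨hpos, fun i => ?_⟩
        have h1 := hmul (N / L) (i + N % L)
        have h2 : i + N % L + N / L * L = i + N := by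
          have := Nat.mod_add_div' N L
          omega
        rw [h2, Nat.add_mod_right] at h1
        exact h1.symm
      have hle := hLmin hmem
      have := Nat.mod_lt N hLpos
      omega
  -- shift within residue class mod L
  have hshift_eq : ∀ i jj : ℕ, s ((i % L + jj) % N) = s ((i + jj) % N) := by
    intro i jj
    have h := hmul (i / L) (i % L + jj)
    have h3 : i % L + jj + i / L * L = i + jj := by
      have := Nat.mod_add_div' i L
      omega
    rw [h, h3]
  have hocc : ∀ (w : Fin k → A) (i : ℕ), OccursAt s N w i ↔ OccursAt s N w (i % L) := by
    intro w i
    constructor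
    · intro h j
      rw [hshift_eq i (j : ℕ)]
      exact h j
    · intro h j
      rw [← hshift_eq i (j : ℕ)]
      exact h j
  set d := N / L with hdq
  have hLd : L * d = N := Nat.mul_div_cancel' hdvd
  have hdpos : 0 < d := Nat.div_pos (Nat.le_of_dvd hNpos hdvd) hLpos
  -- a particular word
  set w : Fin k → A := fun j => s ((j : ℕ) % N) with hw
  -- equivalence of occurrence sets
  have hcard : Nat.card {i : ℕ // i < N ∧ OccursAt s N w i}
      = Nat.card {i : ℕ // i < L ∧ OccursAt s N w i} * d := by
    have e : {i : ℕ // i < N ∧ OccursAt s N w i}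
        ≃ {i : ℕ // i < L ∧ OccursAt s N w i} × Fin d := by
      refine
        { toFun := fun x => (⟨x.1 % L, Nat.mod_lt _ hLpos, (hocc w x.1).mp x.2.2⟩,
            ⟨x.1 / L, Nat.div_lt_of_lt_mul (by rw [hLd]; exact x.2.1)⟩)
          invFun := fun p => ⟨p.1.1 + (p.2 : ℕ) * L, ?_, ?_⟩
          left_inv := ?_
          right_inv := ?_ }
      · calc p.1.1 + (p.2 : ℕ) * L < L + (p.2 : ℕ) * L := by
              have := p.1.2.1; omega
          _ = ((p.2 : ℕ) + 1) * L := by ring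
          _ ≤ d * L := Nat.mul_le_mul_right L (by have := p.2.2; omega)
          _ = N := by rw [Nat.mul_comm]; exact hLd
      · have hmod : (p.1.1 + (p.2 : ℕ) * L) % L = p.1.1 := by
          rw [Nat.add_mul_mod_self_right]
          exact Nat.mod_eq_of_lt p.1.2.1
        have h := (hocc w (p.1.1 + (p.2 : ℕ) * L)).mpr
        rw [hmod] at h
        exact h p.1.2.2
      · intro x
        apply Subtype.ext
        simp only
        have := Nat.mod_add_div' x.1 L
        omega
      · intro p
        have hmod : (p.1.1 + (p.2 : ℕ) * L) % L = p.1.1 := by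
          rw [Nat.add_mul_mod_self_right]
          exact Nat.mod_eq_of_lt p.1.2.1
        have hdiv : (p.1.1 + (p.2 : ℕ) * L) / L = (p.2 : ℕ) := by
          rw [Nat.add_mul_div_right _ _ hLpos, Nat.div_eq_of_lt p.1.2.1]
          omega
        refine Prod.ext (Subtype.ext hmod) (Fin.ext hdiv)
    rw [Nat.card_congr e, Nat.card_prod]
    simp
  have hcardn : Nat.card {i : ℕ // i < N ∧ OccursAt s N w i} = n := (hs w).1
  set m := Nat.card {i : ℕ // i < L ∧ OccursAt s N w i} with hm
  have hnmd : n = m * d := by rw [← hcardn, hcard]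
  refine ⟨m, ?_, ⟨d, hnmd⟩, ?_⟩
  · rcases Nat.eq_zero_or_pos m with h | h
    · exfalso
      rw [h] at hnmd
      simp at hnmd
      omega
    · exact h
  · have hNe : L * d = m * b ^ k * d := by
      rw [hLd, hN, hnmd]; ring
    exact Nat.eq_of_mul_eq_mul_right hdpos hNe
end

section
/- Let [s] be a (k,n)-perfect necklace over an alphabet of size b with period L = j·b^k. Define d_{b,n} = ∏ p_i^{α_i}, where the p_i are the primes dividing b and α_i is the exponent of p_i in the factorization of n. Then d_{b,n} divides j. -/
/-- `d_{b,n} = ∏ pᵢ^{αᵢ}` where the `pᵢ` are the primes dividing `b` and `αᵢ` is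
the exponent of `pᵢ` in the factorization of `n`. -/
def dFactor (b n : ℕ) : ℕ := ∏ p ∈ b.primeFactors, p ^ n.factorization p

/-- Arithmetic key: if `gcd n (j*b^k) ∣ j` then `dFactor b n ∣ j`. -/
lemma dFactor_dvd_aux {b k n j : ℕ} (hb2 : 2 ≤ b) (hk : 0 < k) (hn : 0 < n)
    (hj : 0 < j) (hg : Nat.gcd n (j * b ^ k) ∣ j) : dFactor b n ∣ j := by
  have hb0 : b ≠ 0 := by omega
  have hL0 : j * b ^ k ≠ 0 := by positivity
  have hd0 : dFactor b n ≠ 0 := by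
    refine Finset.prod_ne_zero_iff.2 fun p hp => ?_
    exact pow_ne_zero _ (Nat.prime_of_mem_primeFactors hp).pos.ne'
  rw [← Nat.factorization_le_iff_dvd hd0 hj.ne']
  intro q
  -- factorization of dFactor
  have hfac : (dFactor b n).factorization q
      = ∑ p ∈ b.primeFactors, ((p ^ n.factorization p).factorization) q := by
    rw [dFactor, Nat.factorization_prod]
    · simp [Finsupp.finset_sum_apply]
    · exact fun p hp => pow_ne_zero _ (Nat.prime_of_mem_primeFactors hp).pos.ne'
  have hfac2 : (dFactor b n).factorization q
      = if q ∈ b.primeFactors then n.factorization q else 0 := by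
    rw [hfac]
    rw [Finset.sum_congr rfl (fun p hp =>
      (by rw [Nat.Prime.factorization_pow (Nat.prime_of_mem_primeFactors hp),
        Finsupp.single_apply] :
        (p ^ n.factorization p).factorization q
          = if p = q then n.factorization p else 0))]
    rw [Finset.sum_ite_eq' b.primeFactors q (fun p => n.factorization p)]
  rw [hfac2]
  split_ifs with hq
  · -- q prime dividing b : show n.factorization q ≤ j.factorization q
    have hqp := Nat.prime_of_mem_primeFactors hq
    have hqb := Nat.dvd_of_mem_primeFactors hq
    have h1 : (Nat.gcd n (j * b ^ k)).factorization ≤ j.factorization :=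
      (Nat.factorization_le_iff_dvd (Nat.gcd_ne_zero_left hn.ne') hj.ne').2 hg
    have h2 := h1 q
    rw [Nat.factorization_gcd hn.ne' hL0] at h2
    simp only [Finsupp.inf_apply] at h2
    have h3 : (j * b ^ k).factorization q
        = j.factorization q + k * b.factorization q := by
      rw [Nat.factorization_mul hj.ne' (by positivity), Nat.factorization_pow]
      simp [mul_comm]
    have h4 : 0 < b.factorization q := hqp.factorization_pos_of_dvd hb0 hqb
    rw [h3] at h2
    have : min (n.factorization q) (j.factorization q + k * b.factorization q)
        ≤ j.factorization q := h2
    have hkb : j.factorization q < j.factorization q + k * b.factorization q := by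
      have : 0 < k * b.factorization q := Nat.mul_pos hk h4
      omega
    omega
  · exact Nat.zero_le _


/-- If a `(k,n)`-perfect necklace has period `L = j·b^k`, then `d_{b,n}` divides `j`. -/
theorem dFactor_dvd_of_period {A : Type*} [Fintype A] (b k n L j : ℕ)
    (hb : Fintype.card A = b) (hb2 : 2 ≤ b) (hk : 0 < k) (hn : 0 < n)
    (s : ℕ → A) (hs : IsPerfectNecklace k n s)
    (hL : IsLeast {L' : ℕ | 0 < L' ∧
      ∀ i : ℕ, s (i % (n * b ^ k)) = s ((i + L') % (n * b ^ k))} L)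
    (hj : j ∣ n) (hLj : L = j * b ^ k) :
    dFactor b n ∣ j := by
  have hjpos : 0 < j := Nat.pos_of_dvd_of_pos hj hn
  set N := n * b ^ k with hN
  have hNpos : 0 < N := by positivity
  have hper : ∀ i : ℕ, s (i % N) = s ((i + L) % N) := hL.1.2
  have hper' : ∀ t a : ℕ, s ((a + t * L) % N) = s (a % N) := by
    intro t
    induction t with
    | zero => simp
    | succ t ih =>
      intro a
      have h : a + (t + 1) * L = (a + t * L) + L := by ring
      rw [h, ← hper (a + t * L), ih]
  -- key: n ∣ t*L → N ∣ t*L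
  have key : ∀ t : ℕ, n ∣ t * L → N ∣ t * L := by
    intro t hdvd
    set w : Fin k → A := fun j' => s ((j' : ℕ) % N) with hw
    have h0 : OccursAt s N w 0 := fun j' => by simp [hw]
    have ht : OccursAt s N w ((t * L) % N) := by
      intro j'
      have h1 : ((t * L) % N + (j' : ℕ)) % N = ((j' : ℕ) + t * L) % N := by
        rw [Nat.mod_add_mod]; ring_nf
      rw [h1, hper' t (j' : ℕ)]
    have hlt : (t * L) % N < N := Nat.mod_lt _ hNpos
    have hmod : 0 % n = ((t * L) % N) % n := by
      have h1 : (t * L) % N % n = (t * L) % n := Nat.mod_mod_of_dvd _ ⟨b ^ k, rfl⟩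
      have h2 : (t * L) % n = 0 := by obtain ⟨u, hu⟩ := hdvd; simp [hu]
      rw [Nat.zero_mod, h1, h2]
    have hs2 := (hs w).2
    rw [hb] at hs2
    have heq : 0 = (t * L) % N := hs2 0 _ hNpos hlt h0 ht hmod
    exact Nat.dvd_of_mod_eq_zero heq.symm
  -- deduce gcd n L ∣ j
  set g := Nat.gcd n L with hgdef
  obtain ⟨c, hc⟩ : g ∣ L := Nat.gcd_dvd_right n L
  obtain ⟨m, hm⟩ : g ∣ n := Nat.gcd_dvd_left n L
  have hnd : n ∣ m * L := ⟨c, by rw [hc, hm]; ring⟩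
  have hNd : N ∣ m * L := key m hnd
  have hmLnc : m * L = n * c := by rw [hc, hm]; ring
  rw [hmLnc] at hNd
  have hbk : b ^ k ∣ c := (Nat.mul_dvd_mul_iff_left hn).1 hNd
  obtain ⟨e, he⟩ := hbk
  have hjge : j = g * e := by
    have h1 : j * b ^ k = (g * e) * b ^ k := by
      rw [← hLj, hc, he]; ring
    exact Nat.eq_of_mul_eq_mul_right (by positivity) h1
  have hg : g ∣ j := ⟨e, hjge⟩
  rw [hgdef, hLj] at hg
  exact dFactor_dvd_aux hb2 hk hn hjpos hg
end

section
/- Let [s] be a (k,n)-perfect necklace over an alphabet of size b with period L = j·b^k. Then the cyclic word of length L given by the first L symbols of s is a (k,j)-perfect necklace. -/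
/-- If a `(k,n)`-perfect necklace has period `L = j·b^k`, then the cyclic word
of length `L` given by its first `L` symbols is a `(k,j)`-perfect necklace. -/
theorem irreducible_part_perfect {A : Type*} [Fintype A] (b k n L j : ℕ)
    (hb : Fintype.card A = b) (hb2 : 2 ≤ b) (hk : 0 < k) (hn : 0 < n)
    (s : ℕ → A) (hs : IsPerfectNecklace k n s)
    (hL : IsLeast {L' : ℕ | 0 < L' ∧
      ∀ i : ℕ, s (i % (n * b ^ k)) = s ((i + L') % (n * b ^ k))} L)
    (hj : j ∣ n) (hLj : L = j * b ^ k) :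
    IsPerfectNecklace k j s := by
  classical
  subst hb
  set N := n * Fintype.card A ^ k with hN
  have hper : ∀ i, s (i % N) = s ((i + L) % N) := hL.1.2
  have hL0 : 0 < L := hL.1.1
  have hj0 : 0 < j := by
    rcases Nat.eq_zero_or_pos j with h | h
    · subst h; simp at hLj; omega
    · exact h
  obtain ⟨q, hqn⟩ := hj
  have hq0 : 0 < q := by
    rcases Nat.eq_zero_or_pos q with h | h
    · subst h; simp at hqn; omega
    · exact h
  have hNL : N = q * L := by rw [hLj, hN]; rw [hqn]; ring
  have hLN : L ≤ N := by rw [hNL]; exact Nat.le_mul_of_pos_left L hq0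
  have hN0 : 0 < N := lt_of_lt_of_le hL0 hLN
  set t : ℕ → A := fun i => s (i % N) with ht
  have htL : ∀ i, t (i + L) = t i := fun i => (hper i).symm
  have htmul : ∀ m i, t (i + m * L) = t i := by
    intro m
    induction m with
    | zero => simp
    | succ m ih =>
      intro i
      have h : i + (m + 1) * L = (i + m * L) + L := by ring
      rw [h, htL, ih]
  have hmods : ∀ m, s (m % L) = s (m % N) := by
    intro m
    have h1 : (m % L) % N = m % L := Nat.mod_eq_of_lt (lt_of_lt_of_le (Nat.mod_lt _ hL0) hLN)
    have h2 : t (m % L) = t m := by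
      conv_rhs => rw [← Nat.mod_add_div' m L]
      rw [htmul]
    have h3 : t (m % L) = s (m % L) := by rw [ht]; simp only; rw [h1]
    have h4 : t m = s (m % N) := rfl
    rw [← h3, h2, h4]
  have hmodj : ∀ (x m : ℕ), (x + m * L) % j = x % j := by
    intro x m
    rw [hLj, show x + m * (j * Fintype.card A ^ k) = x + (m * Fintype.card A ^ k) * j by ring,
      Nat.add_mul_mod_self_right]
  intro w
  have hdist := (hs w).2
  have hcardN := (hs w).1
  have hOccShift : ∀ (i m : ℕ), OccursAt s N w (i + m * L) ↔ OccursAt s N w i := by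
    intro i m
    unfold OccursAt
    refine forall_congr' fun a => ?_
    have h : i + m * L + (a : ℕ) = (i + (a : ℕ)) + m * L := by ring
    rw [h]
    have h2 : s ((i + (a : ℕ) + m * L) % N) = s ((i + (a : ℕ)) % N) := htmul m (i + (a : ℕ))
    rw [h2]
  have hOccL : ∀ i, OccursAt s L w i ↔ OccursAt s N w i := by
    intro i
    unfold OccursAt
    exact forall_congr' fun a => by rw [hmods (i + (a : ℕ))]
  have hOccMod : ∀ i, OccursAt s N w i ↔ OccursAt s N w (i % L) := by
    intro i
    conv_lhs => rw [← Nat.mod_add_div' i L]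
    exact hOccShift (i % L) (i / L)
  constructor
  · -- count
    rw [← hLj]
    have E : {i : ℕ // i < N ∧ OccursAt s N w i} ≃
        {i : ℕ // i < L ∧ OccursAt s N w i} × Fin q :=
      { toFun := fun x => (⟨x.1 % L, Nat.mod_lt _ hL0, (hOccMod x.1).mp x.2.2⟩,
          ⟨x.1 / L, (Nat.div_lt_iff_lt_mul hL0).mpr (by rw [← hNL]; exact x.2.1)⟩)
        invFun := fun p => ⟨p.1.1 + (p.2 : ℕ) * L, by
          constructor
          · calc p.1.1 + (p.2 : ℕ) * L < L + (p.2 : ℕ) * L := by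
                  have := p.1.2.1; omega
              _ = ((p.2 : ℕ) + 1) * L := by ring
              _ ≤ q * L := Nat.mul_le_mul_right L p.2.isLt
              _ = N := hNL.symm
          · exact (hOccShift p.1.1 (p.2 : ℕ)).mpr p.1.2.2⟩
        left_inv := fun x => Subtype.ext (Nat.mod_add_div' x.1 L)
        right_inv := fun p => by
          have h1 : (p.1.1 + (p.2 : ℕ) * L) % L = p.1.1 := by
            rw [Nat.add_mul_mod_self_right, Nat.mod_eq_of_lt p.1.2.1]
          have h2 : (p.1.1 + (p.2 : ℕ) * L) / L = (p.2 : ℕ) := by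
            rw [Nat.add_mul_div_right _ _ hL0, Nat.div_eq_of_lt p.1.2.1, Nat.zero_add]
          exact Prod.ext (Subtype.ext h1) (Fin.ext h2) }
    have h1 : Nat.card {i : ℕ // i < N ∧ OccursAt s N w i} = n := hcardN
    have hfq : Nat.card (Fin q) = q := by simp
    rw [Nat.card_congr E, Nat.card_prod, hfq] at h1
    have h2 : Nat.card {i : ℕ // i < L ∧ OccursAt s N w i} = j := by
      have : j * q = n := hqn.symm
      exact Nat.eq_of_mul_eq_mul_right hq0 (by omega)
    rw [← h2]
    exact Nat.card_congr (Equiv.subtypeEquivRight fun i =>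
      and_congr_right fun _ => hOccL i)
  · -- distinctness
    rw [← hLj]
    intro i i' hi hi' hoi hoi' hmod
    rw [hOccL] at hoi hoi'
    set f : Fin q → Fin q := fun m => ⟨((i' + (m : ℕ) * L) % n) / j, by
      rw [Nat.div_lt_iff_lt_mul hj0]
      have h6 : (i' + (m : ℕ) * L) % n < n := Nat.mod_lt _ hn
      have h7 : q * j = n := by rw [hqn]; ring
      omega⟩ with hf
    have hmj : ∀ x m'' : ℕ, ((x + m'' * L) % n) % j = x % j := by
      intro x m''
      rw [Nat.mod_mod_of_dvd _ ⟨q, hqn⟩, hmodj]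
    have hfinj : Function.Injective f := by
      intro m m' hmm
      have h3 : ((i' + (m : ℕ) * L) % n) / j = ((i' + (m' : ℕ) * L) % n) / j :=
        congrArg Fin.val hmm
      have h4 := hmj i' (m : ℕ)
      have h5 := hmj i' (m' : ℕ)
      have heq : (i' + (m : ℕ) * L) % n = (i' + (m' : ℕ) * L) % n := by
        rw [← Nat.div_add_mod ((i' + (m : ℕ) * L) % n) j,
          ← Nat.div_add_mod ((i' + (m' : ℕ) * L) % n) j, h3, h4, h5]
      have hb1 : i' + (m : ℕ) * L < N := by
        calc i' + (m : ℕ) * L < L + (m : ℕ) * L := by omega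
          _ = ((m : ℕ) + 1) * L := by ring
          _ ≤ q * L := Nat.mul_le_mul_right L m.isLt
          _ = N := hNL.symm
      have hb2' : i' + (m' : ℕ) * L < N := by
        calc i' + (m' : ℕ) * L < L + (m' : ℕ) * L := by omega
          _ = ((m' : ℕ) + 1) * L := by ring
          _ ≤ q * L := Nat.mul_le_mul_right L m'.isLt
          _ = N := hNL.symm
      have := hdist (i' + (m : ℕ) * L) (i' + (m' : ℕ) * L) hb1 hb2'
        ((hOccShift i' (m : ℕ)).mpr hoi') ((hOccShift i' (m' : ℕ)).mpr hoi') heq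
      have hml : (m : ℕ) * L = (m' : ℕ) * L := by omega
      exact Fin.ext (Nat.eq_of_mul_eq_mul_right hL0 hml)
    have hfsurj := Finite.injective_iff_surjective.mp hfinj
    obtain ⟨m', hm'⟩ := hfsurj ⟨(i % n) / j, by
      rw [Nat.div_lt_iff_lt_mul hj0]
      have h6 : i % n < n := Nat.mod_lt _ hn
      have h7 : q * j = n := by rw [hqn]; ring
      omega⟩
    have hdivs : ((i' + (m' : ℕ) * L) % n) / j = (i % n) / j := congrArg Fin.val hm'
    have hmodeq : (i' + (m' : ℕ) * L) % n = i % n := by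
      have h4 := hmj i' (m' : ℕ)
      have h5 : i % n % j = i % j := Nat.mod_mod_of_dvd _ ⟨q, hqn⟩
      rw [← Nat.div_add_mod ((i' + (m' : ℕ) * L) % n) j, ← Nat.div_add_mod (i % n) j,
        hdivs, h4, h5, hmod]
    have hb1 : i < N := lt_of_lt_of_le hi hLN
    have hb2' : i' + (m' : ℕ) * L < N := by
      calc i' + (m' : ℕ) * L < L + (m' : ℕ) * L := by omega
        _ = ((m' : ℕ) + 1) * L := by ring
        _ ≤ q * L := Nat.mul_le_mul_right L m'.isLt
        _ = N := hNL.symm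
    have hfin := hdist i (i' + (m' : ℕ) * L) hb1 hb2' hoi
      ((hOccShift i' (m' : ℕ)).mpr hoi') hmodeq.symm
    -- hfin : i = i' + m' * L, with i < L, i' < L
    have hm0 : (m' : ℕ) = 0 := by
      by_contra h
      have : L ≤ (m' : ℕ) * L := Nat.le_mul_of_pos_left L (Nat.pos_of_ne_zero h)
      omega
    rw [hm0, Nat.zero_mul, Nat.add_zero] at hfin
    exact hfin
end

section
/- Every Eulerian circuit in the astute graph G_{k−1,n} induces a (k,n)-perfect necklace: reading off, along the circuit, the last symbol of the first coordinate of each node visited produces a cyclic word of length n·b^{k−1}·b = n·b^k that is (k,n)-perfect, and conversely every (k,n)-perfect necklace arises from some Eulerian circuit in G_{k−1,n}. -/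
/-- The target of the edge of the astute graph `G_{s,n}` leaving the node `p`
with label `a`: the word of `p` is shifted one place (dropping its first symbol
and appending `a`) and the counter is increased by one modulo `n`. -/
def astuteStep (b s n : ℕ) (p : (Fin s → Fin b) × ZMod n) (a : Fin b) :
    (Fin s → Fin b) × ZMod n :=
  (fun i => if h : (i : ℕ) + 1 < s then p.1 ⟨(i : ℕ) + 1, h⟩ else a, p.2 + 1)

/-- An Eulerian circuit in the astute graph `G_{k−1,n}` (edges are pairs
`(node, label)`, and there are `n·b^k` of them), presented as a cyclically
indexed sequence of edges: consecutive edges are incident, and every edge is used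
exactly once per period. -/
def IsEulerianCircuit (b k n : ℕ)
    (c : ℕ → ((Fin (k - 1) → Fin b) × ZMod n) × Fin b) : Prop :=
  (∀ i : ℕ, (c ((i + 1) % (n * b ^ k))).1 =
      astuteStep b (k - 1) n (c (i % (n * b ^ k))).1 (c (i % (n * b ^ k))).2) ∧
  (∀ e : ((Fin (k - 1) → Fin b) × ZMod n) × Fin b, ∃! i : ℕ, i < n * b ^ k ∧ c i = e)

/-! An edge of `G_{k,n}` is a word of length `k + 1` together with a counter in `ℤ/nℤ`. Along a
closed walk of length `L = n·b^(k+1)` the edge at position `i + k` is the window of the label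
sequence starting at `i`, with counter `i` plus a constant. Hence the walk uses every edge once
iff `i ↦ (window at i, i mod n)` is a bijection on positions modulo `L`, which is exactly
perfectness of the label sequence (injectivity is the distinctness condition, and the counts
follow from `L = n·b^(k+1)`). Conversely, reading at each position the window ending there turns
any cyclic word into a closed walk with those labels. -/

open Function

theorem existsUnique_lt_iff_bijective {α : Type*} {L : ℕ} (f : ℕ → α) :
    (∀ a, ∃! i, i < L ∧ f i = a) ↔ Bijective (fun i : Fin L => f i) := by
  rw [bijective_iff_existsUnique]
  refine forall_congr' fun a => ⟨fun ⟨i, ⟨hi, hfi⟩, huniq⟩ => ?_, fun ⟨i, hfi, huniq⟩ => ?_⟩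
  · exact ⟨⟨i, hi⟩, hfi, fun j hj => Fin.ext (huniq j ⟨j.2, hj⟩)⟩
  · exact ⟨i, ⟨i.2, hfi⟩, fun j ⟨hj, hfj⟩ => congrArg Fin.val (huniq ⟨j, hj⟩ hfj)⟩

section Window

variable {A : Type*}

def window {k : ℕ} (x : ℕ → A) (L t : ℕ) : Fin k → A := fun j => x ((t + j) % L)

theorem occursAt_iff_window_eq {k : ℕ} (x : ℕ → A) (L : ℕ) (w : Fin k → A) (t : ℕ) :
    OccursAt x L w t ↔ window x L t = w :=
  funext_iff.symm

theorem window_congr {k : ℕ} (x : ℕ → A) {L t t' : ℕ} (h : t ≡ t' [MOD L]) :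
    (window x L t : Fin k → A) = window x L t' :=
  funext fun j => congrArg x (h.add_right j)

theorem tail_window {k : ℕ} (x : ℕ → A) (L t : ℕ) :
    Fin.tail (window x L t : Fin (k + 1) → A) = window x L (t + 1) := by
  funext j
  simp only [Fin.tail, window, Fin.val_succ, Nat.add_right_comm, Nat.add_assoc]

def positionedWindow {k : ℕ} (n : ℕ) (x : ℕ → A) (L : ℕ) : Fin L → (Fin k → A) × ZMod n :=
  fun i => (window x L i, i)

theorem isPerfectNecklace_iff_bijective [Fintype A] {k n : ℕ} [NeZero n] (x : ℕ → A) :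
    IsPerfectNecklace k n x ↔
      Bijective (positionedWindow (k := k) n x (n * Fintype.card A ^ k)) := by
  set L := n * Fintype.card A ^ k
  constructor
  · intro hx
    refine (Fintype.bijective_iff_injective_and_card _).2 ⟨?_, ?_⟩
    · rintro ⟨i, hi⟩ ⟨i', hi'⟩ h
      obtain ⟨hw, hv⟩ := Prod.ext_iff.1 h
      exact Fin.ext <| (hx _).2 i i' hi hi' ((occursAt_iff_window_eq ..).2 rfl)
        ((occursAt_iff_window_eq ..).2 hw.symm) ((ZMod.natCast_eq_natCast_iff' ..).1 hv)
    · simp [L, Fintype.card_prod, mul_comm]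
  · intro hbij w
    have hocc : ∀ i, OccursAt x L w i ↔ window x L i = w := occursAt_iff_window_eq x L w
    refine ⟨?_, fun i i' hi hi' ho ho' hmod => ?_⟩
    · let residue : {i : ℕ // i < L ∧ OccursAt x L w i} → ZMod n := fun i => (i : ℕ)
      have : Bijective residue := by
        refine ⟨fun ⟨i, hi, ho⟩ ⟨i', hi', ho'⟩ h => ?_, fun v => ?_⟩
        · refine Subtype.ext (congrArg Fin.val (hbij.1 (a₁ := ⟨i, hi⟩) (a₂ := ⟨i', hi'⟩) ?_))
          exact Prod.ext (((hocc i).1 ho).trans ((hocc i').1 ho').symm) h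
        · obtain ⟨i, hi⟩ := hbij.2 (w, v)
          exact ⟨⟨i, i.2, (hocc i).2 (congrArg Prod.fst hi)⟩, congrArg Prod.snd hi⟩
      rw [Nat.card_congr (Equiv.ofBijective _ this), Nat.card_zmod]
    · refine congrArg Fin.val (hbij.1 (a₁ := ⟨i, hi⟩) (a₂ := ⟨i', hi'⟩) ?_)
      exact Prod.ext (((hocc i).1 ho).trans ((hocc i').1 ho').symm)
        ((ZMod.natCast_eq_natCast_iff' ..).2 hmod)

end Window

section AstuteGraph

def wordEdgeEquiv (b k n : ℕ) :
    (Fin (k + 1) → Fin b) × ZMod n ≃ ((Fin k → Fin b) × ZMod n) × Fin b where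
  toFun p := ((Fin.init p.1, p.2), p.1 (Fin.last k))
  invFun e := (Fin.snoc e.1.1 e.2, e.1.2)
  left_inv p := by simp
  right_inv e := by simp

variable {b k n : ℕ}

theorem astuteStep_wordEdgeEquiv (w : Fin (k + 1) → Fin b) (v : ZMod n) :
    astuteStep b k n (wordEdgeEquiv b k n (w, v)).1 (wordEdgeEquiv b k n (w, v)).2 =
      (Fin.tail w, v + 1) := by
  refine Prod.ext (funext fun j => ?_) rfl
  simp only [astuteStep, wordEdgeEquiv, Equiv.coe_fn_mk, Fin.init, Fin.tail]
  split_ifs with h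
  · exact congrArg w (Fin.ext rfl)
  · exact congrArg w (Fin.ext (by simp; omega))

theorem astuteStep_walk_word {p : ℕ → (Fin k → Fin b) × ZMod n} {a : ℕ → Fin b}
    (hp : ∀ t, p (t + 1) = astuteStep b k n (p t) (a t)) (t : ℕ) (m : Fin k) :
    (p (t + k)).1 m = a (t + m) := by
  suffices ∀ d (m : ℕ) (hm : m < k), k ≤ m + d → (p (t + d)).1 ⟨m, hm⟩ = a (t + d + m - k) by
    simpa [Nat.add_right_comm t k, Nat.add_sub_cancel] using this k m m.2 (by omega)
  intro d
  induction d with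
  | zero => intro m hm h; omega
  | succ d ih =>
    intro m hm h
    rw [← Nat.add_assoc, hp]
    simp only [astuteStep]
    split_ifs with h'
    · rw [ih (m + 1) h' (by omega)]; congr 1; omega
    · congr 1; omega

theorem astuteStep_walk_counter {p : ℕ → (Fin k → Fin b) × ZMod n} {a : ℕ → Fin b}
    (hp : ∀ t, p (t + 1) = astuteStep b k n (p t) (a t)) (t : ℕ) :
    (p t).2 = (p 0).2 + t := by
  induction t with
  | zero => simp
  | succ t ih => rw [hp, astuteStep, ih]; push_cast; ring

end AstuteGraph

section NecklaceCircuit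

variable {b k n L : ℕ}

theorem add_sub_one_mul_add_modEq (hL : 0 < L) (t k : ℕ) : t + (L - 1) * k + k ≡ t [MOD L] := by
  rw [Nat.add_assoc, Nat.sub_one_mul, Nat.sub_add_cancel (Nat.le_mul_of_pos_left k hL)]
  exact Nat.add_mul_mod_self_left t L k

/-- As `(L - 1) * k ≡ -k [MOD L]`, the edge at position `i` carries the window of `x` ending
at `i`. -/
def necklaceCircuit (k : ℕ) (x : ℕ → Fin b) (L : ℕ) (a : ZMod n) (i : ℕ) :
    ((Fin k → Fin b) × ZMod n) × Fin b :=
  wordEdgeEquiv b k n (window x L (i + (L - 1) * k), a + i)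

variable (x : ℕ → Fin b) (a : ZMod n)

theorem necklaceCircuit_step (hnL : n ∣ L) (i : ℕ) :
    (necklaceCircuit k x L a ((i + 1) % L)).1 =
      astuteStep b k n (necklaceCircuit k x L a (i % L)).1
        (necklaceCircuit k x L a (i % L)).2 := by
  rw [necklaceCircuit, necklaceCircuit, astuteStep_wordEdgeEquiv, tail_window]
  have h : (i + 1) % L ≡ i % L + 1 [MOD L] :=
    (Nat.mod_modEq _ _).trans ((Nat.mod_modEq i L).symm.add_right 1)
  refine Prod.ext (window_congr x (h.add_right _ |>.trans ?_)) ?_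
  · rw [Nat.add_right_comm]
  · simp only [(ZMod.natCast_eq_natCast_iff ..).2 (h.of_dvd hnL), Nat.cast_add, Nat.cast_one,
      add_assoc]
    rfl

theorem necklaceCircuit_label (hL : 0 < L) (i : ℕ) :
    (necklaceCircuit k x L a i).2 = x (i % L) :=
  congrArg x (add_sub_one_mul_add_modEq hL i k)

theorem bijective_necklaceCircuit_iff [NeZero L] (hnL : n ∣ L) :
    Bijective (fun i : Fin L => necklaceCircuit k x L a i) ↔
      Bijective (positionedWindow (k := k + 1) n x L) := by
  have hL : 0 < L := Nat.pos_of_neZero L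
  have hrot (i : Fin L) :
      ((i + Fin.ofNat L ((L - 1) * k) : Fin L) : ℕ) ≡ i + (L - 1) * k [MOD L] := by
    rw [Fin.val_add, Fin.val_ofNat]
    exact (Nat.mod_modEq _ _).trans ((Nat.mod_modEq _ _).add_left _)
  have : (fun i : Fin L => necklaceCircuit k x L a i) =
      wordEdgeEquiv b k n ∘ (Equiv.refl _).prodCongr (Equiv.addRight (a + k)) ∘
        positionedWindow n x L ∘ Equiv.addRight (Fin.ofNat L ((L - 1) * k)) := by
    funext i
    refine congrArg (wordEdgeEquiv b k n) (Prod.ext (window_congr x (hrot i)).symm ?_)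
    simp only [comp_apply, positionedWindow, Equiv.prodCongr_apply, Prod.map_snd,
      Equiv.coe_addRight, (ZMod.natCast_eq_natCast_iff ..).2 ((hrot i).of_dvd hnL)]
    rw [← (ZMod.natCast_eq_natCast_iff ..).2 ((add_sub_one_mul_add_modEq hL i k).of_dvd hnL)]
    push_cast
    ring
  rw [this, Equiv.comp_bijective, Equiv.comp_bijective, Equiv.bijective_comp]

theorem eq_necklaceCircuit {c : ℕ → ((Fin k → Fin b) × ZMod n) × Fin b}
    (hc : ∀ i, (c ((i + 1) % L)).1 = astuteStep b k n (c (i % L)).1 (c (i % L)).2)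
    (hnL : n ∣ L) {i : ℕ} (hi : i < L) :
    c i = necklaceCircuit k (fun t => (c (t % L)).2) L (c 0).1.2 i := by
  set t := i + (L - 1) * k
  have ht : t + k ≡ i [MOD L] := add_sub_one_mul_add_modEq (by omega) i k
  have hpos : (t + k) % L = i := Eq.trans ht (Nat.mod_eq_of_lt hi)
  have word := astuteStep_walk_word (p := fun t => (c (t % L)).1) hc t
  have counter := astuteStep_walk_counter (p := fun t => (c (t % L)).1) hc (t + k)
  simp only [hpos, Nat.zero_mod, (ZMod.natCast_eq_natCast_iff ..).2 (ht.of_dvd hnL)] at word counter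
  refine Prod.ext (Prod.ext (funext fun m => ?_) counter) ?_
  · rw [word m]
    exact congrArg (fun j => (c j).2) (Nat.mod_mod _ _).symm
  · simp [necklaceCircuit, wordEdgeEquiv, window, t, hpos, Nat.mod_eq_of_lt hi]

end NecklaceCircuit

/-- Eulerian circuits in the astute graph `G_{k−1,n}` correspond to `(k,n)`-perfect
necklaces: reading off the edge labels (the new last symbol of the word of each node
visited) along an Eulerian circuit produces a `(k,n)`-perfect cyclic word of length
`n·b^k`, and conversely every `(k,n)`-perfect necklace arises this way. -/
theorem eulerian_iff_perfect (b k n : ℕ) (hb : 2 ≤ b) (hk : 1 ≤ k) [NeZero n] :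
    (∀ c : ℕ → ((Fin (k - 1) → Fin b) × ZMod n) × Fin b,
      IsEulerianCircuit b k n c →
        IsPerfectNecklace k n (fun i => (c (i % (n * b ^ k))).2)) ∧
    (∀ x : ℕ → Fin b, IsPerfectNecklace k n x →
      ∃ c : ℕ → ((Fin (k - 1) → Fin b) × ZMod n) × Fin b,
        IsEulerianCircuit b k n c ∧ ∀ i < n * b ^ k, x i = (c i).2) := by
  obtain ⟨k, rfl⟩ : ∃ k', k = k' + 1 := ⟨k - 1, by omega⟩
  have : NeZero b := ⟨by omega⟩
  have hnL : n ∣ n * b ^ (k + 1) := dvd_mul_right n _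
  refine ⟨fun c ⟨hstep, huniq⟩ => ?_, fun x hx => ?_⟩
  · rw [isPerfectNecklace_iff_bijective, Fintype.card_fin,
      ← bijective_necklaceCircuit_iff _ (c 0).1.2 hnL]
    have hc : (fun i : Fin (n * b ^ (k + 1)) => c i) = fun i : Fin (n * b ^ (k + 1)) =>
        necklaceCircuit k (fun t => (c (t % (n * b ^ (k + 1)))).2) _ (c 0).1.2 i :=
      funext fun i => eq_necklaceCircuit hstep hnL i.2
    rwa [existsUnique_lt_iff_bijective, hc] at huniq
  · rw [isPerfectNecklace_iff_bijective, Fintype.card_fin,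
      ← bijective_necklaceCircuit_iff _ 0 hnL] at hx
    refine ⟨necklaceCircuit k x _ 0, ⟨necklaceCircuit_step x 0 hnL,
      (existsUnique_lt_iff_bijective _).2 hx⟩, fun i hi => ?_⟩
    rw [necklaceCircuit_label x 0 (Nat.pos_of_neZero _), Nat.mod_eq_of_lt hi]
end

section
/- Let b ≥ 2, k ≥ 1, j ≥ 1. The characteristic polynomial of the adjacency matrix of the astute graph G_{k−1,j} (nodes A^{k−1} × ℤ/jℤ, |A| = b) equals x^{j(b^{k−1} − 1)} · (x^j − b^j). -/
open Matrix Polynomial Finset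

section StepMatrix

variable {V L : Type*} [DecidableEq V]

def stepMatrix [Fintype L] (step : V → L → V) : Matrix V V ℤ :=
  of fun p q => (#{a | step p a = q} : ℤ)

def lineStep (step : V → L → V) (e : V × L) (a : L) : V × L :=
  (step e.1 e.2, a)

variable (V L) in
def tailIncidence : Matrix (V × L) V ℤ :=
  of fun e p => if e.1 = p then 1 else 0

def headIncidence (step : V → L → V) : Matrix (V × L) V ℤ :=
  of fun e q => if step e.1 e.2 = q then 1 else 0

variable [Fintype V] [Fintype L]

theorem transpose_tailIncidence_mul_headIncidence (step : V → L → V) :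
    (tailIncidence V L)ᵀ * headIncidence step = stepMatrix step := by
  ext p q
  simp only [mul_apply, transpose_apply, of_apply, tailIncidence, headIncidence, stepMatrix,
    Fintype.sum_prod_type_right, ite_mul, one_mul, zero_mul, sum_ite_eq', mem_univ, if_true,
    sum_boole]

theorem headIncidence_mul_transpose_tailIncidence [DecidableEq L] (step : V → L → V) :
    headIncidence step * (tailIncidence V L)ᵀ = stepMatrix (lineStep step) := by
  ext e f
  simp only [mul_apply, transpose_apply, tailIncidence, headIncidence, of_apply, stepMatrix,
    lineStep, ite_mul, one_mul, zero_mul, sum_ite_eq, mem_univ, if_true, Prod.ext_iff]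
  by_cases h : step e.1 e.2 = f.1
  · simp [h, filter_eq']
  · simp [h, Ne.symm h]

theorem charpoly_stepMatrix_lineStep [DecidableEq L] [Nonempty L] (step : V → L → V) :
    (stepMatrix (lineStep step)).charpoly =
      X ^ (Fintype.card V * Fintype.card L - Fintype.card V) * (stepMatrix step).charpoly := by
  have hcard : Fintype.card V ≤ Fintype.card (V × L) := by
    rw [Fintype.card_prod]
    exact Nat.le_mul_of_pos_right _ Fintype.card_pos
  rw [← headIncidence_mul_transpose_tailIncidence, ← transpose_tailIncidence_mul_headIncidence,
    charpoly_mul_comm_of_le _ _ hcard, Fintype.card_prod]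

end StepMatrix

theorem stepMatrix_eq_reindex {V W L : Type*} [DecidableEq V] [DecidableEq W] [Fintype L]
    (φ : V ≃ W) {f : V → L → V} {g : W → L → W} (h : ∀ x a, g (φ x) a = φ (f x a)) :
    stepMatrix g = reindex φ φ (stepMatrix f) := by
  ext p q
  simp only [stepMatrix, reindex_apply, submatrix_apply, of_apply]
  congr 3
  ext a
  rw [← φ.apply_symm_apply p, h, ← φ.eq_symm_apply]
  simp

theorem charmatrix_smul_permMatrix_apply {R n : Type*} [CommRing R] [Fintype n]
    [DecidableEq n] (σ : Equiv.Perm n) (c : R) (p q : n) :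
    charmatrix (c • σ.permMatrix R) p q =
      (if p = q then X else 0) - C (if σ p = q then c else 0) := by
  simp [charmatrix_apply, diagonal_apply, PEquiv.toMatrix_apply, Equiv.toPEquiv_apply]

namespace ZMod

theorem sign_addRight_one (j : ℕ) [NeZero j] :
    Equiv.Perm.sign (Equiv.addRight (1 : ZMod j)) = (-1) ^ (j - 1) := by
  obtain ⟨n, rfl⟩ : ∃ n, j = n + 1 := Nat.exists_eq_succ_of_ne_zero (NeZero.ne j)
  rw [← sign_finRotate]
  congr 1
  ext i
  exact (finRotate_apply i).symm

theorem perm_eq_one_or_eq_addRight_inv {j : ℕ} [NeZero j] {τ : Equiv.Perm (ZMod j)}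
    (h : ∀ i, τ i = i ∨ τ i = i - 1) : τ = 1 ∨ τ = (Equiv.addRight 1)⁻¹ := by
  by_cases hfix : ∃ i₀, τ i₀ = i₀
  · obtain ⟨i₀, hi₀⟩ := hfix
    have hsucc : ∀ i, τ i = i → τ (i + 1) = i + 1 := by
      intro i hi
      refine (h (i + 1)).elim id fun h' => ?_
      have : i + 1 = i := τ.injective (by rw [hi, h', add_sub_cancel_right])
      rw [h', add_sub_cancel_right, this]
    have hiter : ∀ k : ℕ, τ (i₀ + k) = i₀ + k := by
      intro k
      induction k with
      | zero => simpa using hi₀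
      | succ k ih => simpa [add_assoc] using hsucc _ ih
    left
    ext y
    simpa using hiter (y - i₀).val
  · push Not at hfix
    right
    ext i
    simpa [sub_eq_add_neg] using (h i).resolve_left (hfix i)

variable {R : Type*} [CommRing R] in
theorem charpoly_smul_permMatrix_addRight_one (j : ℕ) [NeZero j] (c : R) :
    (c • (Equiv.addRight (1 : ZMod j)).permMatrix R).charpoly = X ^ j - C (c ^ j) := by
  rcases (Nat.one_le_iff_ne_zero.mpr (NeZero.ne j)).eq_or_lt with rfl | hj
  · rw [Subsingleton.elim (Equiv.addRight (1 : ZMod 1)) 1, charpoly, det_unique,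
      charmatrix_apply_eq]
    simp
  have : Fact (1 < j) := ⟨hj⟩
  set σ := Equiv.addRight (1 : ZMod j)
  -- only the identity and `σ⁻¹ : i ↦ i - 1` pick nonzero entries in the Leibniz expansion
  rw [charpoly, det_apply, Fintype.sum_eq_add 1 σ⁻¹]
  · have hid :
        ∏ i, charmatrix (c • σ.permMatrix R) ((1 : Equiv.Perm (ZMod j)) i) i = X ^ j := by
      simp [σ]
    have hinv : ∏ i, charmatrix (c • σ.permMatrix R) (σ⁻¹ i) i = (-C c) ^ j := by
      simp [σ]
    obtain ⟨n, rfl⟩ : ∃ n, j = n + 1 := Nat.exists_eq_succ_of_ne_zero (NeZero.ne j)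
    have hsign : ((-1) ^ n * (-1) ^ (n + 1) : R[X]) = -1 := by
      rw [← pow_add]
      exact Odd.neg_one_pow ⟨n, by ring⟩
    rw [hid, hinv, Equiv.Perm.sign_one, one_smul, Equiv.Perm.sign_inv, sign_addRight_one,
      Units.smul_def, zsmul_eq_mul, neg_pow, C_pow]
    push_cast
    linear_combination C c ^ (n + 1) * hsign
  · simp [Equiv.Perm.ext_iff, σ]
  · rintro τ ⟨hτ1, hτσ⟩
    obtain ⟨i, hi, hi'⟩ : ∃ i, τ i ≠ i ∧ τ i ≠ i - 1 := by
      by_contra! h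
      exact (perm_eq_one_or_eq_addRight_inv fun i => (em _).imp_right (h i)).elim hτ1 hτσ
    refine smul_eq_zero_of_right _ (prod_eq_zero (mem_univ i) ?_)
    have hσ : σ (τ i) ≠ i := fun h => hi' (eq_sub_of_add_eq h)
    rw [charmatrix_smul_permMatrix_apply, if_neg hi, if_neg hσ, map_zero, sub_zero]

end ZMod

theorem stepMatrix_addRight_one (j : ℕ) (L : Type*) [Fintype L] :
    stepMatrix (fun (v : ZMod j) (_ : L) => v + 1) =
      (Fintype.card L : ℤ) • (Equiv.addRight (1 : ZMod j)).permMatrix ℤ := by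
  ext p q
  by_cases h : p + 1 = q <;> simp [stepMatrix, PEquiv.toMatrix_apply, h]

section Astute

def astuteEdgeEquiv (b s j : ℕ) :
    ((Fin s → Fin b) × ZMod j) × Fin b ≃ (Fin (s + 1) → Fin b) × ZMod j where
  toFun e := (Fin.snoc e.1.1 e.2, e.1.2)
  invFun x := ((Fin.init x.1, x.2), x.1 (Fin.last s))
  left_inv e := by simp
  right_inv x := by simp

variable {b s j : ℕ}

theorem astuteStep_snoc (p : (Fin s → Fin b) × ZMod j) (a a' : Fin b) :
    astuteStep b (s + 1) j (Fin.snoc p.1 a, p.2) a' =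
      (Fin.snoc (astuteStep b s j p a).1 a', (astuteStep b s j p a).2) := by
  refine Prod.ext (funext fun i => ?_) rfl
  simp only [astuteStep, Fin.snoc, Fin.val_castLT, cast_eq]
  split_ifs <;> first | rfl | omega

theorem stepMatrix_astuteStep_zero :
    stepMatrix (astuteStep b 0 j) =
      reindex (Equiv.uniqueProd (ZMod j) (Fin 0 → Fin b)).symm
        (Equiv.uniqueProd (ZMod j) (Fin 0 → Fin b)).symm
        (stepMatrix fun (v : ZMod j) (_ : Fin b) => v + 1) :=
  stepMatrix_eq_reindex _ fun _ _ => Prod.ext (Subsingleton.elim _ _) rfl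

theorem stepMatrix_astuteStep_succ :
    stepMatrix (astuteStep b (s + 1) j) =
      reindex (astuteEdgeEquiv b s j) (astuteEdgeEquiv b s j)
        (stepMatrix (lineStep (astuteStep b s j))) :=
  stepMatrix_eq_reindex _ fun x a => astuteStep_snoc x.1 x.2 a

end Astute

theorem charpoly_stepMatrix_astuteStep {b j : ℕ} (hb : 1 ≤ b) [NeZero j] (s : ℕ) :
    (stepMatrix (astuteStep b s j)).charpoly =
      X ^ (j * (b ^ s - 1)) * (X ^ j - C ((b : ℤ) ^ j)) := by
  induction s with
  | zero =>
    rw [stepMatrix_astuteStep_zero, charpoly_reindex, stepMatrix_addRight_one,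
      ZMod.charpoly_smul_permMatrix_addRight_one]
    simp
  | succ s ih =>
    have : Nonempty (Fin b) := ⟨⟨0, hb⟩⟩
    rw [stepMatrix_astuteStep_succ, charpoly_reindex, charpoly_stepMatrix_lineStep, ih,
      ← mul_assoc, ← pow_add]
    congr 2
    have hbs : 1 ≤ b ^ s := Nat.one_le_pow _ _ hb
    have hmono : b ^ s * j ≤ b ^ s * j * b := Nat.le_mul_of_pos_right _ hb
    simp only [Fintype.card_prod, Fintype.card_fun, Fintype.card_fin, ZMod.card]
    zify [hbs, hmono, Nat.one_le_pow (s + 1) b hb]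
    ring

theorem charpoly_astute_general (b k j : ℕ) (hb : 2 ≤ b) [NeZero j] :
    Matrix.charpoly
      (Matrix.of fun p q : (Fin (k - 1) → Fin b) × ZMod j =>
        ((Finset.univ.filter
          (fun a : Fin b => astuteStep b (k - 1) j p a = q)).card : ℤ)) =
    Polynomial.X ^ (j * (b ^ (k - 1) - 1)) *
      (Polynomial.X ^ j - Polynomial.C ((b : ℤ) ^ j)) :=
  charpoly_stepMatrix_astuteStep (by omega) (k - 1)

/-- The characteristic polynomial of the adjacency matrix of the astute graph
`G_{k−1,j}` (nodes `A^{k−1} × ℤ/jℤ`, the `(p,q)` entry counting the labels `a`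
with `astuteStep p a = q`) equals `x^{j(b^{k−1} − 1)} · (x^j − b^j)`. -/
theorem charpoly_astute (b k j : ℕ) (hb : 2 ≤ b) (hk : 1 ≤ k) [NeZero j] :
    Matrix.charpoly
      (Matrix.of fun p q : (Fin (k - 1) → Fin b) × ZMod j =>
        ((Finset.univ.filter
          (fun a : Fin b => astuteStep b (k - 1) j p a = q)).card : ℤ)) =
    Polynomial.X ^ (j * (b ^ (k - 1) - 1)) *
      (Polynomial.X ^ j - Polynomial.C ((b : ℤ) ^ j)) :=
  charpoly_astute_general b k j hb
end
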